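/- arXiv:2402.17055 — 9 statements merged into one kernel-verified Lean document; each statement's English description precedes it below -/
import Mathlib

section
/- Let s = (1 2 3 4 5)(6 7 8 9 10) and t = (1 6)(2 4)(7 8)(9 10) be permutations of {1,...,10}. Then s·t has order 6 and the subgroup generated by s and t is the alternating group A₁₀. -/
open Equiv

set_option maxRecDepth 40000

namespace Stmt3Aux

def ss : Equiv.Perm (Fin 10) := c[1,2,3,4,5] * c[6,7,8,9,10]
def tt : Equiv.Perm (Fin 10) := c[1,6] * c[2,4] * c[7,8] * c[9,10]
def H : Subgroup (Equiv.Perm (Fin 10)) := Subgroup.closure {ss, tt}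

lemma hss : ss ∈ H := Subgroup.subset_closure (Set.mem_insert _ _)
lemma htt : tt ∈ H := Subgroup.subset_closure (Set.mem_insert_of_mem _ rfl)

lemma hx2eq : Equiv.swap (0 : Fin 10) 1 * Equiv.swap 0 2 = tt*ss⁻¹*tt*ss*tt*ss⁻¹*ss⁻¹*tt*ss⁻¹*tt*ss⁻¹*ss⁻¹*tt*ss⁻¹*tt*ss*ss*tt*ss*ss*tt*ss*ss := by decide
lemma hx2 : Equiv.swap (0 : Fin 10) 1 * Equiv.swap 0 2 ∈ H := by rw [hx2eq]; exact (mul_mem (mul_mem (mul_mem (mul_mem (mul_mem (mul_mem (mul_mem (mul_mem (mul_mem (mul_mem (mul_mem (mul_mem (mul_mem (mul_mem (mul_mem (mul_mem (mul_mem (mul_mem (mul_mem (mul_mem (mul_mem (mul_mem htt (inv_mem hss)) htt) hss) htt) (inv_mem hss)) (inv_mem hss)) htt) (inv_mem hss)) htt) (inv_mem hss)) (inv_mem hss)) htt) (inv_mem hss)) htt) hss) hss) htt) hss) hss) htt) hss) hss)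

lemma hx3eq : Equiv.swap (0 : Fin 10) 1 * Equiv.swap 0 3 = ss*tt*ss*ss*tt*ss*ss*tt*ss⁻¹*tt*ss*tt*ss⁻¹*ss⁻¹*tt*ss⁻¹*tt*ss⁻¹*ss⁻¹*tt*ss⁻¹*tt*ss := by decide
lemma hx3 : Equiv.swap (0 : Fin 10) 1 * Equiv.swap 0 3 ∈ H := by rw [hx3eq]; exact (mul_mem (mul_mem (mul_mem (mul_mem (mul_mem (mul_mem (mul_mem (mul_mem (mul_mem (mul_mem (mul_mem (mul_mem (mul_mem (mul_mem (mul_mem (mul_mem (mul_mem (mul_mem (mul_mem (mul_mem (mul_mem (mul_mem hss htt) hss) hss) htt) hss) hss) htt) (inv_mem hss)) htt) hss) htt) (inv_mem hss)) (inv_mem hss)) htt) (inv_mem hss)) htt) (inv_mem hss)) (inv_mem hss)) htt) (inv_mem hss)) htt) hss)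

lemma hx4eq : Equiv.swap (0 : Fin 10) 1 * Equiv.swap 0 4 = ss⁻¹*ss⁻¹*tt*ss⁻¹*ss⁻¹*tt*ss⁻¹*tt*ss⁻¹*ss⁻¹*tt*ss⁻¹*ss⁻¹*tt*ss*tt*ss⁻¹*ss⁻¹*tt*ss*ss*tt*ss⁻¹*tt := by decide
lemma hx4 : Equiv.swap (0 : Fin 10) 1 * Equiv.swap 0 4 ∈ H := by rw [hx4eq]; exact (mul_mem (mul_mem (mul_mem (mul_mem (mul_mem (mul_mem (mul_mem (mul_mem (mul_mem (mul_mem (mul_mem (mul_mem (mul_mem (mul_mem (mul_mem (mul_mem (mul_mem (mul_mem (mul_mem (mul_mem (mul_mem (mul_mem (mul_mem (inv_mem hss) (inv_mem hss)) htt) (inv_mem hss)) (inv_mem hss)) htt) (inv_mem hss)) htt) (inv_mem hss)) (inv_mem hss)) htt) (inv_mem hss)) (inv_mem hss)) htt) hss) htt) (inv_mem hss)) (inv_mem hss)) htt) hss) hss) htt) (inv_mem hss)) htt)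

lemma hx5eq : Equiv.swap (0 : Fin 10) 1 * Equiv.swap 0 5 = tt*ss*tt*ss⁻¹*tt*ss*ss*tt*ss*ss*tt*ss*tt*ss*ss*tt*ss*ss*tt*ss*tt*ss⁻¹*ss⁻¹*tt*ss*tt := by decide
lemma hx5 : Equiv.swap (0 : Fin 10) 1 * Equiv.swap 0 5 ∈ H := by rw [hx5eq]; exact (mul_mem (mul_mem (mul_mem (mul_mem (mul_mem (mul_mem (mul_mem (mul_mem (mul_mem (mul_mem (mul_mem (mul_mem (mul_mem (mul_mem (mul_mem (mul_mem (mul_mem (mul_mem (mul_mem (mul_mem (mul_mem (mul_mem (mul_mem (mul_mem (mul_mem htt hss) htt) (inv_mem hss)) htt) hss) hss) htt) hss) hss) htt) hss) htt) hss) hss) htt) hss) hss) htt) hss) htt) (inv_mem hss)) (inv_mem hss)) htt) hss) htt)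

lemma hx6eq : Equiv.swap (0 : Fin 10) 1 * Equiv.swap 0 6 = tt*ss⁻¹*tt*ss⁻¹*ss⁻¹*tt*ss⁻¹*tt*ss⁻¹*ss⁻¹*tt*ss⁻¹*tt*ss⁻¹*ss⁻¹*tt*ss⁻¹*tt*ss⁻¹*ss⁻¹*tt*ss⁻¹*tt*ss⁻¹*ss⁻¹ := by decide
lemma hx6 : Equiv.swap (0 : Fin 10) 1 * Equiv.swap 0 6 ∈ H := by rw [hx6eq]; exact (mul_mem (mul_mem (mul_mem (mul_mem (mul_mem (mul_mem (mul_mem (mul_mem (mul_mem (mul_mem (mul_mem (mul_mem (mul_mem (mul_mem (mul_mem (mul_mem (mul_mem (mul_mem (mul_mem (mul_mem (mul_mem (mul_mem (mul_mem (mul_mem htt (inv_mem hss)) htt) (inv_mem hss)) (inv_mem hss)) htt) (inv_mem hss)) htt) (inv_mem hss)) (inv_mem hss)) htt) (inv_mem hss)) htt) (inv_mem hss)) (inv_mem hss)) htt) (inv_mem hss)) htt) (inv_mem hss)) (inv_mem hss)) htt) (inv_mem hss)) htt) (inv_mem hss)) (inv_mem hss))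

lemma hx7eq : Equiv.swap (0 : Fin 10) 1 * Equiv.swap 0 7 = tt*ss*ss*tt*ss⁻¹*tt*ss⁻¹*ss⁻¹*tt*ss⁻¹*ss⁻¹*tt*ss⁻¹*tt*ss⁻¹*ss⁻¹*tt*ss⁻¹*ss⁻¹*tt*ss*tt*ss⁻¹*ss⁻¹ := by decide
lemma hx7 : Equiv.swap (0 : Fin 10) 1 * Equiv.swap 0 7 ∈ H := by rw [hx7eq]; exact (mul_mem (mul_mem (mul_mem (mul_mem (mul_mem (mul_mem (mul_mem (mul_mem (mul_mem (mul_mem (mul_mem (mul_mem (mul_mem (mul_mem (mul_mem (mul_mem (mul_mem (mul_mem (mul_mem (mul_mem (mul_mem (mul_mem (mul_mem htt hss) hss) htt) (inv_mem hss)) htt) (inv_mem hss)) (inv_mem hss)) htt) (inv_mem hss)) (inv_mem hss)) htt) (inv_mem hss)) htt) (inv_mem hss)) (inv_mem hss)) htt) (inv_mem hss)) (inv_mem hss)) htt) hss) htt) (inv_mem hss)) (inv_mem hss))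

lemma hx8eq : Equiv.swap (0 : Fin 10) 1 * Equiv.swap 0 8 = tt*ss⁻¹*ss⁻¹*tt*ss⁻¹*ss⁻¹*tt*ss*tt*ss⁻¹*ss⁻¹*tt*ss*ss*tt*ss⁻¹*tt*ss⁻¹*ss⁻¹*tt*ss⁻¹*ss⁻¹*tt*ss⁻¹ := by decide
lemma hx8 : Equiv.swap (0 : Fin 10) 1 * Equiv.swap 0 8 ∈ H := by rw [hx8eq]; exact (mul_mem (mul_mem (mul_mem (mul_mem (mul_mem (mul_mem (mul_mem (mul_mem (mul_mem (mul_mem (mul_mem (mul_mem (mul_mem (mul_mem (mul_mem (mul_mem (mul_mem (mul_mem (mul_mem (mul_mem (mul_mem (mul_mem (mul_mem htt (inv_mem hss)) (inv_mem hss)) htt) (inv_mem hss)) (inv_mem hss)) htt) hss) htt) (inv_mem hss)) (inv_mem hss)) htt) hss) hss) htt) (inv_mem hss)) htt) (inv_mem hss)) (inv_mem hss)) htt) (inv_mem hss)) (inv_mem hss)) htt) (inv_mem hss))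

lemma hx9eq : Equiv.swap (0 : Fin 10) 1 * Equiv.swap 0 9 = ss⁻¹*tt*ss*tt*ss*tt*ss⁻¹*tt*ss⁻¹*ss⁻¹*tt*ss*ss*tt*ss*ss*tt*ss⁻¹*ss⁻¹*tt*ss*tt := by decide
lemma hx9 : Equiv.swap (0 : Fin 10) 1 * Equiv.swap 0 9 ∈ H := by rw [hx9eq]; exact (mul_mem (mul_mem (mul_mem (mul_mem (mul_mem (mul_mem (mul_mem (mul_mem (mul_mem (mul_mem (mul_mem (mul_mem (mul_mem (mul_mem (mul_mem (mul_mem (mul_mem (mul_mem (mul_mem (mul_mem (mul_mem (inv_mem hss) htt) hss) htt) hss) htt) (inv_mem hss)) htt) (inv_mem hss)) (inv_mem hss)) htt) hss) hss) htt) hss) hss) htt) (inv_mem hss)) (inv_mem hss)) htt) hss) htt)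


lemma hx : ∀ k : Fin 10, k ≠ 0 → k ≠ 1 → Equiv.swap (0 : Fin 10) 1 * Equiv.swap 0 k ∈ H := by
  intro k h0 h1
  fin_cases k
  · exact absurd rfl h0
  · exact absurd rfl h1
  · exact hx2
  · exact hx3
  · exact hx4
  · exact hx5
  · exact hx6
  · exact hx7
  · exact hx8
  · exact hx9

lemma hxinv : ∀ k : Fin 10, k ≠ 0 → k ≠ 1 →
    (Equiv.swap (0 : Fin 10) 1 * Equiv.swap 0 k)⁻¹ ∈ H := fun k h0 h1 => inv_mem (hx k h0 h1)

lemma rot1 : ∀ a b c : Fin 10, a ≠ b → a ≠ c → b ≠ c →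
    Equiv.swap a b * Equiv.swap a c = Equiv.swap c a * Equiv.swap c b := by decide

lemma L2 : ∀ b : Fin 10, b ≠ 0 → b ≠ 1 →
    Equiv.swap (0 : Fin 10) b * Equiv.swap 0 1 = (Equiv.swap (0 : Fin 10) 1 * Equiv.swap 0 b)⁻¹ := by
  decide

lemma L3 : ∀ b c : Fin 10, b ≠ c → b ≠ 0 → b ≠ 1 → c ≠ 0 → c ≠ 1 →
    Equiv.swap (0 : Fin 10) b * Equiv.swap 0 c =
      (Equiv.swap (0 : Fin 10) 1 * Equiv.swap 0 c) * (Equiv.swap (0 : Fin 10) 1 * Equiv.swap 0 b) *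
        (Equiv.swap (0 : Fin 10) 1 * Equiv.swap 0 c)⁻¹ := by decide

lemma L4 : ∀ b c : Fin 10, b ≠ c → b ≠ 0 → b ≠ 1 → c ≠ 0 → c ≠ 1 →
    Equiv.swap (1 : Fin 10) b * Equiv.swap 1 c =
      (Equiv.swap (0 : Fin 10) 1 * Equiv.swap 0 b)⁻¹ * (Equiv.swap (0 : Fin 10) 1 * Equiv.swap 0 c) *
        (Equiv.swap (0 : Fin 10) 1 * Equiv.swap 0 b) := by decide

lemma L5 : ∀ a b c : Fin 10,
    a ≠ b ∧ a ≠ c ∧ b ≠ c ∧ a ≠ 0 ∧ a ≠ 1 ∧ b ≠ 0 ∧ b ≠ 1 ∧ c ≠ 0 ∧ c ≠ 1 →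
    Equiv.swap a b * Equiv.swap a c =
      (Equiv.swap (0 : Fin 10) 1 * Equiv.swap 0 a) * (Equiv.swap (0 : Fin 10) 1 * Equiv.swap 0 c) *
        (Equiv.swap (0 : Fin 10) 1 * Equiv.swap 0 b) * (Equiv.swap (0 : Fin 10) 1 * Equiv.swap 0 c)⁻¹ *
        (Equiv.swap (0 : Fin 10) 1 * Equiv.swap 0 a)⁻¹ := by decide

/-- zero-first case -/
lemma K0 : ∀ b c : Fin 10, b ≠ c → b ≠ 0 → c ≠ 0 →
    Equiv.swap (0 : Fin 10) b * Equiv.swap 0 c ∈ H := by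
  intro b c hbc hb0 hc0
  by_cases hb1 : b = 1
  · subst hb1
    exact hx c hc0 (Ne.symm hbc)
  · by_cases hc1 : c = 1
    · subst hc1
      rw [L2 b hb0 hb1]
      exact hxinv b hb0 hb1
    · rw [L3 b c hbc hb0 hb1 hc0 hc1]
      exact mul_mem (mul_mem (hx c hc0 hc1) (hx b hb0 hb1)) (hxinv c hc0 hc1)

lemma K3 : ∀ a b c : Fin 10, a ≠ b → a ≠ c → b ≠ c →
    Equiv.swap a b * Equiv.swap a c ∈ H := by
  intro a b c hab hac hbc
  by_cases ha0 : a = 0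
  · subst ha0; exact K0 b c hbc (Ne.symm hab) (Ne.symm hac)
  · by_cases hb0 : b = 0
    · rw [rot1 a b c hab hac hbc, rot1 c a b (Ne.symm hac) (Ne.symm hbc) hab]
      subst hb0
      exact K0 c a (Ne.symm hac) (Ne.symm hbc) ha0
    · by_cases hc0 : c = 0
      · rw [rot1 a b c hab hac hbc]
        subst hc0
        exact K0 a b hab ha0 hbc
      · by_cases ha1 : a = 1
        · subst ha1
          rw [L4 b c hbc hb0 (Ne.symm hab) hc0 (Ne.symm hac)]
          exact mul_mem (mul_mem (hxinv b hb0 (Ne.symm hab)) (hx c hc0 (Ne.symm hac)))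
            (hx b hb0 (Ne.symm hab))
        · by_cases hb1 : b = 1
          · rw [rot1 a b c hab hac hbc, rot1 c a b (Ne.symm hac) (Ne.symm hbc) hab]
            subst hb1
            rw [L4 c a (Ne.symm hac) hc0 (Ne.symm hbc) ha0 hab]
            exact mul_mem (mul_mem (hxinv c hc0 (Ne.symm hbc)) (hx a ha0 hab))
              (hx c hc0 (Ne.symm hbc))
          · by_cases hc1 : c = 1
            · rw [rot1 a b c hab hac hbc]
              subst hc1
              rw [L4 a b hab ha0 hac hb0 hbc]
              exact mul_mem (mul_mem (hxinv a ha0 hac) (hx b hb0 hbc)) (hx a ha0 hac)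
            · rw [L5 a b c ⟨hab, hac, hbc, ha0, ha1, hb0, hb1, hc0, hc1⟩]
              exact mul_mem (mul_mem (mul_mem (mul_mem (hx a ha0 ha1) (hx c hc0 hc1))
                (hx b hb0 hb1)) (hxinv c hc0 hc1)) (hxinv a ha0 ha1)

lemma K3' : ∀ a b c : Fin 10, a ≠ b → a ≠ c →
    Equiv.swap a b * Equiv.swap a c ∈ H := by
  intro a b c hab hac
  by_cases hbc : b = c
  · subst hbc
    rw [Equiv.swap_mul_self]
    exact one_mem H
  · exact K3 a b c hab hac hbc

lemma KH {σ τ : Equiv.Perm (Fin 10)} (hσ : σ.IsSwap) (hτ : τ.IsSwap) : σ * τ ∈ H := by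
  obtain ⟨a, b, hab, rfl⟩ := hσ
  obtain ⟨c, d, hcd, rfl⟩ := hτ
  by_cases hac : a = c
  · subst hac
    exact K3' a b d hab hcd
  · have h' : Equiv.swap a b * Equiv.swap c d =
        Equiv.swap a b * Equiv.swap a c * (Equiv.swap c a * Equiv.swap c d) := by
      simp [Equiv.swap_comm c a, mul_assoc]
    rw [h']
    exact mul_mem (K3' a b c hab hac) (K3' c a d (Ne.symm hac) hcd)

lemma A_le_H : alternatingGroup (Fin 10) ≤ H := by
  intro σ hσ
  suffices hind : ∀ (n : ℕ) (l : List (Equiv.Perm (Fin 10))),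
      (∀ g ∈ l, g.IsSwap) → l.length = 2 * n → l.prod ∈ H by
    obtain ⟨l, rfl, hl⟩ := Equiv.Perm.truncSwapFactors σ
    obtain ⟨n, hn⟩ := (Equiv.Perm.prod_list_swap_mem_alternatingGroup_iff_even_length hl).1 hσ
    rw [← two_mul] at hn
    exact hind n l hl hn
  intro n
  induction' n with n ih <;> intro l hl hn
  · simp [List.length_eq_zero_iff.1 hn, one_mem]
  · rw [Nat.mul_succ] at hn
    obtain ⟨a, l, rfl⟩ := l.exists_of_length_succ hn
    rw [List.length_cons, Nat.succ_inj] at hn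
    obtain ⟨b, l, rfl⟩ := l.exists_of_length_succ hn
    rw [List.prod_cons, List.prod_cons, ← mul_assoc]
    rw [List.length_cons, Nat.succ_inj] at hn
    exact mul_mem
      (KH (hl a List.mem_cons_self) (hl b (List.mem_cons_of_mem a List.mem_cons_self)))
      (ih _ (fun g hg => hl g (List.mem_cons_of_mem _ (List.mem_cons_of_mem _ hg))) hn)

lemma H_le_A : H ≤ alternatingGroup (Fin 10) := by
  rw [H, Subgroup.closure_le]
  rintro u (rfl | rfl)
  · rw [SetLike.mem_coe, Equiv.Perm.mem_alternatingGroup]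
    decide
  · rw [SetLike.mem_coe, Equiv.Perm.mem_alternatingGroup]
    decide

lemma H_eq_A : H = alternatingGroup (Fin 10) := le_antisymm H_le_A A_le_H

lemma ord6 : orderOf (ss * tt) = 6 := by
  rw [orderOf_eq_iff (by norm_num)]
  refine ⟨by decide, ?_⟩
  intro m hm hm'
  interval_cases m <;> decide

end Stmt3Aux

theorem stmt3 :
    let s : Equiv.Perm (Fin 10) := c[1,2,3,4,5] * c[6,7,8,9,10]
    let t : Equiv.Perm (Fin 10) := c[1,6] * c[2,4] * c[7,8] * c[9,10]
    orderOf (s * t) = 6 ∧ Subgroup.closure {s, t} = alternatingGroup (Fin 10) := by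
  intro s t
  exact ⟨Stmt3Aux.ord6, Stmt3Aux.H_eq_A⟩
end

section
/- Let s = (1 2 3 4 5)(6 7 8 9 10) and t = (1 6)(2 4)(7 11)(8 12) be permutations of {1,...,12}. Then s·t has order 10 and ⟨s,t⟩ = A₁₂. -/
open Equiv

namespace Stmt4Aux

open Equiv.Perm Subgroup

set_option maxRecDepth 8000

def sP : Perm (Fin 12) := c[1,2,3,4,5] * c[6,7,8,9,10]
def tP : Perm (Fin 12) := c[1,6] * c[2,4] * c[7,11] * c[8,12]

def uw : Fin 12 → List Bool :=
  ![[],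
    [false, true, true, true, true, true, true, true, true, false],
    [true, false, true, true, true, true, true, true, true, true, false],
    [true, true, false, true, true, true, true, true, true, true, true, false],
    [false, true, false, true, true, true, true, true, true, true, true, false],
    [true, true, true, true, false, true, true, true, true, true, true, true, true, false],
    [true, true, true, true, true, true, true, true, false],
    [true, true, true, true, false],
    [false],
    [true, false],
    [true, true, false],
    [false, true, true, true, true, false]]
def vw : Fin 12 → List Bool :=
  ![[],
    [],
    [true],
    [true, true],
    [true, true, true, true, true, true, true, true],
    [true, true, true, true],
    [true, true, true, true, false, true, true, true, true, false, true, false],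
    [false, true, true, true, true, false, true, false],
    [true, false, true, true, true, true, false, true, false],
    [true, true, false, true, true, true, true, false, true, false],
    [false, true, true, true, true, false, true, false, true, true, true, true],
    [false, true, false, true, true, true, true, false, true, true, true, true, false, true, true, true, true]]
def ww : Fin 12 → List Bool :=
  ![[],
    [],
    [],
    [true, false, true, false, true, true, true, true, false, true, true, true, true, false, true],
    [true, false, true, false, true, true, true, true, false, true, true, true, true, true, true, true, true, false, true, false, true],
    [true, true, false, true, false, true, false, true, true, true, true, false],
    [true, false, true, false, true, true, true, true, true, true, true, true, false, true, true, true, true, false, true, true],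
    [true, true, false, true, true, true, true, false, true, false, true, true, true, true, true, true, true, true],
    [true, false, true, true, true, true, true, true, true, true, false, true, false, true, false, true, true, true, true, true, true, true, true],
    [true, true, true, true, true, true, true, true, false, true, false, true, false, true, true, true, true, false, true],
    [true, true, true, true, false, true, true, true, true, false, true, false, true],
    [false, true, false, true, true, true, true, false, true, true, true, true, false, true, true, true, true, true, true, true, true]]


def evalw (l : List Bool) : Perm (Fin 12) :=
  (l.map (fun b => if b then sP else tP)).prod

abbrev H : Subgroup (Perm (Fin 12)) := Subgroup.closure {sP, tP}

theorem evalw_mem (l : List Bool) : evalw l ∈ H := by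
  apply list_prod_mem
  intro x hx
  simp only [List.mem_map] at hx
  obtain ⟨b, -, rfl⟩ := hx
  cases b
  · exact subset_closure (Or.inr rfl)
  · exact subset_closure (Or.inl rfl)

def U (a : Fin 12) : Perm (Fin 12) := evalw (uw a)
def V (b : Fin 12) : Perm (Fin 12) := evalw (vw b)
def W (c : Fin 12) : Perm (Fin 12) := evalw (ww c)

theorem hU : ∀ a : Fin 12, U a 0 = a := by decide
theorem hV0 : ∀ b : Fin 12, V b 0 = 0 := by decide
theorem hV1 : ∀ b : Fin 12, b ≠ 0 → V b 1 = b := by decide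
theorem hW0 : ∀ c : Fin 12, W c 0 = 0 := by decide
theorem hW1 : ∀ c : Fin 12, W c 1 = 1 := by decide
theorem hW2 : ∀ c : Fin 12, c ≠ 0 → c ≠ 1 → W c 2 = c := by decide


def r1 : Perm (Fin 12) := c[0,11,2,5,6,8] * c[1,4,3,7,9,10]

def ch1 : List Bool := [true, false, true, true, true, true, false, true, false, false]

def r2 : Perm (Fin 12) := c[0,8,9] * c[1,5,10,3,6,2,4,7,11]

def ch2 : List Bool := [true, true, true, false, true, true, true, true, true, true]

def r3 : Perm (Fin 12) := c[0,11,2,8] * c[1,5,7,10,6] * c[3,9]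

def ch3 : List Bool := [true, true, false, true, true, false, true, true, true, true]

def r4 : Perm (Fin 12) := c[0,3,9,8,2,5,6,10,1,4,11]

def ch4 : List Bool := [true, true, true, true, false, true, true, false, true, true]

def r5 : Perm (Fin 12) := c[0,10] * c[1,3,4,9,5,6,11] * c[2,7]

def ch5 : List Bool := [true, true, true, true, true, true, false, true, true, false]

def r6 : Perm (Fin 12) := c[0,11] * c[1,7,10,9,8,2,3,6]

def ch6 : List Bool := [true, true, true, true, true, true, true, true, false, true]

def r7 : Perm (Fin 12) := c[0,9,1,2,7] * c[3,5] * c[8,11]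

def ch7 : List Bool := [true, true, true, false, false, true, true, true, true, false]

def r8 : Perm (Fin 12) := c[0,1,2]

def ch8 : List Bool := [true, false, true, true, true, true]

theorem e1 : r1 = evalw ch1 := by decide

theorem m1 : r1 ∈ H := e1 ▸ evalw_mem ch1

theorem e2 : r2 = r1 * evalw ch2 := by decide

theorem m2 : r2 ∈ H := e2 ▸ mul_mem m1 (evalw_mem ch2)

theorem e3 : r3 = r2 * evalw ch3 := by decide

theorem m3 : r3 ∈ H := e3 ▸ mul_mem m2 (evalw_mem ch3)

theorem e4 : r4 = r3 * evalw ch4 := by decide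

theorem m4 : r4 ∈ H := e4 ▸ mul_mem m3 (evalw_mem ch4)

theorem e5 : r5 = r4 * evalw ch5 := by decide

theorem m5 : r5 ∈ H := e5 ▸ mul_mem m4 (evalw_mem ch5)

theorem e6 : r6 = r5 * evalw ch6 := by decide

theorem m6 : r6 ∈ H := e6 ▸ mul_mem m5 (evalw_mem ch6)

theorem e7 : r7 = r6 * evalw ch7 := by decide

theorem m7 : r7 ∈ H := e7 ▸ mul_mem m6 (evalw_mem ch7)

theorem e8 : r8 = r7 * evalw ch8 := by decide

theorem m8 : r8 ∈ H := e8 ▸ mul_mem m7 (evalw_mem ch8)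

theorem base_eq2 : r8 = (swap 0 2 * swap 0 1 : Perm (Fin 12)) := by decide

theorem hbase : (swap 0 2 * swap 0 1 : Perm (Fin 12)) ∈ H := base_eq2 ▸ m8

theorem Perm.apply_inv_self (f : Perm (Fin 12)) (x : Fin 12) : f (f⁻¹ x) = x :=
  f.apply_symm_apply x

theorem three_mem (a b c : Fin 12) (hab : a ≠ b) (hac : a ≠ c) (hbc : b ≠ c) :
    swap a c * swap a b ∈ H := by
  have hb' : (U a)⁻¹ b ≠ 0 := by
    rw [Ne, Perm.inv_eq_iff_eq, hU]
    exact fun h => hab h.symm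
  have hc'0 : (V ((U a)⁻¹ b))⁻¹ ((U a)⁻¹ c) ≠ 0 := by
    rw [Ne, Perm.inv_eq_iff_eq, hV0, Perm.inv_eq_iff_eq, hU]
    exact fun h => hac h.symm
  have hc'1 : (V ((U a)⁻¹ b))⁻¹ ((U a)⁻¹ c) ≠ 1 := by
    rw [Ne, Perm.inv_eq_iff_eq, hV1 _ hb', Perm.inv_eq_iff_eq, Perm.apply_inv_self]
    exact fun h => hbc h.symm
  set g : Perm (Fin 12) :=
    U a * V ((U a)⁻¹ b) * W ((V ((U a)⁻¹ b))⁻¹ ((U a)⁻¹ c)) with hg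
  have hg0 : g 0 = a := by
    simp only [hg, Perm.mul_apply, hW0, hV0, hU]
  have hg1 : g 1 = b := by
    simp only [hg, Perm.mul_apply, hW1, hV1 _ hb', Perm.apply_inv_self]
  have hg2 : g 2 = c := by
    simp only [hg, Perm.mul_apply, hW2 _ hc'0 hc'1, Perm.apply_inv_self]
  have key : swap a c * swap a b = g * (swap 0 2 * swap 0 1) * g⁻¹ := by
    rw [← hg0, ← hg1, ← hg2, swap_apply_apply, swap_apply_apply]
    group
  rw [key]
  have hgH : g ∈ H := mul_mem (mul_mem (evalw_mem _) (evalw_mem _)) (evalw_mem _)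
  exact mul_mem (mul_mem hgH hbase) (inv_mem hgH)

theorem decomp {f : Perm (Fin 12)} (hf : Perm.IsThreeCycle f) :
    ∃ a b c : Fin 12, a ≠ b ∧ a ≠ c ∧ b ≠ c ∧ f = swap a c * swap a b := by
  obtain ⟨a, ha⟩ : f.support.Nonempty := by
    rw [← Finset.card_pos, hf.card_support]; norm_num
  have hfa : f a ≠ a := Perm.mem_support.mp ha
  have h3 : f ^ 3 = 1 := by rw [← hf.orderOf]; exact pow_orderOf_eq_one f
  have hfc : f (f (f a)) = a := by
    have h := congrFun (congrArg (fun p : Perm (Fin 12) => ⇑p) h3) a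
    simpa [pow_succ, Perm.mul_apply] using h
  have hab : a ≠ f a := Ne.symm hfa
  have hbc : f a ≠ f (f a) := fun h => hfa (f.injective h).symm
  have hac : a ≠ f (f a) := by
    intro h
    apply hfa
    have h2 := congrArg f h
    rw [hfc] at h2
    exact h2
  refine ⟨a, f a, f (f a), hab, hac, hbc, ?_⟩
  have hset : ({a, f a, f (f a)} : Finset (Fin 12)).card = 3 := by
    rw [Finset.card_insert_of_notMem (by simp [hab, hac]),
      Finset.card_insert_of_notMem (by simp [hbc]), Finset.card_singleton]
  have hsub : ({a, f a, f (f a)} : Finset (Fin 12)) ⊆ f.support := by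
    intro x hx
    simp only [Finset.mem_insert, Finset.mem_singleton] at hx
    rcases hx with rfl | rfl | rfl
    · exact ha
    · exact Perm.mem_support.mpr (Ne.symm hbc)
    · exact Perm.mem_support.mpr (by rw [hfc]; exact hac)
  have hsupp : f.support = {a, f a, f (f a)} :=
    (Finset.eq_of_subset_of_card_le hsub (by rw [hf.card_support, hset])).symm
  ext x
  simp only [Perm.mul_apply]
  rcases eq_or_ne x a with rfl | hxa
  · rw [swap_apply_left, swap_apply_of_ne_of_ne (Ne.symm hab) hbc]
  rcases eq_or_ne x (f a) with rfl | hxb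
  · rw [swap_apply_right, swap_apply_left]
  rcases eq_or_ne x (f (f a)) with rfl | hxc
  · rw [swap_apply_of_ne_of_ne (Ne.symm hac) (Ne.symm hbc), swap_apply_right, hfc]
  · have hxs : x ∉ f.support := by
      rw [hsupp]
      simp [hxa, hxb, hxc]
    rw [swap_apply_of_ne_of_ne hxa hxb, swap_apply_of_ne_of_ne hxa hxc,
      Perm.notMem_support.mp hxs]

theorem main : orderOf (sP * tP) = 10 ∧
    Subgroup.closure {sP, tP} = alternatingGroup (Fin 12) := by
  constructor
  · rw [orderOf_eq_iff (by norm_num)]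
    refine ⟨by decide, ?_⟩
    intro m hm hm0
    interval_cases m <;> decide
  · apply le_antisymm
    · rw [closure_le]
      intro x hx
      simp only [Set.mem_insert_iff, Set.mem_singleton_iff] at hx
      rcases hx with rfl | rfl
      · exact Perm.mem_alternatingGroup.mpr (by decide)
      · exact Perm.mem_alternatingGroup.mpr (by decide)
    · rw [← closure_three_cycles_eq_alternating, closure_le]
      intro f hf
      obtain ⟨a, b, c, hab, hac, hbc, rfl⟩ := decomp hf
      exact three_mem a b c hab hac hbc

end Stmt4Aux

theorem stmt4 :
    let s : Equiv.Perm (Fin 12) := c[1,2,3,4,5] * c[6,7,8,9,10]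
    let t : Equiv.Perm (Fin 12) := c[1,6] * c[2,4] * c[7,11] * c[8,12]
    orderOf (s * t) = 10 ∧ Subgroup.closure {s, t} = alternatingGroup (Fin 12) := by
  intro s t
  exact Stmt4Aux.main
end

section
/- Let s = (1 2 3 4 5 6 7)(8 9 10 11 12 13 14) and t = (1 3)(4 6)(7 8)(9 13)(10 15)(11 16) be permutations of {1,...,16}. Then s·t has order 6 and ⟨s,t⟩ = A₁₆. -/
open Equiv Equiv.Perm Subgroup

set_option maxRecDepth 40000
set_option maxHeartbeats 1000000

private def S : Perm (Fin 16) := c[1,2,3,4,5,6,7] * c[8,9,10,11,12,13,14]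
private def T : Perm (Fin 16) := c[1,3] * c[4,6] * c[7,8] * c[9,13] * c[10,15] * c[11,16]

private def st8g : Fin 4 → Perm (Fin 16)
  | 0 => (⟨![0,2,3,4,5,6,7,1,9,10,11,12,13,14,8,15], ![0,7,1,2,3,4,5,6,14,8,9,10,11,12,13,15], by decide, by decide⟩ : Perm (Fin 16))
  | 1 => (⟨![11,3,2,1,6,5,4,8,7,13,15,0,12,9,14,10], ![11,3,2,1,6,5,4,8,7,13,15,0,12,9,14,10], by decide, by decide⟩ : Perm (Fin 16))
  | 2 => (⟨![0,7,1,2,3,4,5,6,14,8,9,10,11,12,13,15], ![0,2,3,4,5,6,7,1,9,10,11,12,13,14,8,15], by decide, by decide⟩ : Perm (Fin 16))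
  | 3 => (⟨![11,3,2,1,6,5,4,8,7,13,15,0,12,9,14,10], ![11,3,2,1,6,5,4,8,7,13,15,0,12,9,14,10], by decide, by decide⟩ : Perm (Fin 16))

private def st8wp (l : List (Fin 4)) : Perm (Fin 16) := (l.map st8g).prod

private theorem st8order : orderOf (S * T) = 6 := by
  rw [orderOf_eq_iff (by norm_num)]
  exact ⟨by decide, by decide⟩

private theorem st8main :
    Subgroup.closure ({S, T} : Set (Perm (Fin 16))) = alternatingGroup (Fin 16) := by
  set H := Subgroup.closure ({S, T} : Set (Perm (Fin 16))) with hHdef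
  have hs : S ∈ H := subset_closure (Set.mem_insert _ _)
  have ht : T ∈ H := subset_closure (Set.mem_insert_of_mem _ rfl)
  have hwp : ∀ l : List (Fin 4), st8wp l ∈ H := by
    have hgmem : ∀ j : Fin 4, st8g j ∈ H := by
      intro j
      match j with
      | 0 => have e : st8g 0 = S := by decide
             rw [e]; exact hs
      | 1 => have e : st8g 1 = T := by decide
             rw [e]; exact ht
      | 2 => have e : st8g 2 = S⁻¹ := by decide
             rw [e]; exact inv_mem hs
      | 3 => have e : st8g 3 = T⁻¹ := by decide
             rw [e]; exact inv_mem ht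
    intro l
    show (l.map st8g).prod ∈ H
    refine list_prod_mem ?_
    intro x hx
    rw [List.mem_map] at hx
    obtain ⟨i, _, rfl⟩ := hx
    exact hgmem i
  have hrsr : (finRotate 16) * S * (finRotate 16)⁻¹ ∈ H := by
    have e : (finRotate 16) * S * (finRotate 16)⁻¹ = st8wp [0,0,3,0,3,2,1,2,1,2,2,2,3,0,3,0,0,0,0,0,1,2,2,2,1,2,2,1,2,1,2,1,0,1,2,2,2,2,1,2,2,3,0,3,2,3,0,0,0,3,2,2,1,0,1,2,1,2,2,3,2,3,0,0,0,3,0,3,0,1,2,1,2,2,3,0,3,0,1,2,1,2,2,1,2,2,2,1,0,0,0,0,3,2,3,0,1,2,3,2,2,1,0,0,1,0,0,0,1,2,2,3,2,2,3,2,2,1,2,3,0,3,2,3,2,2,3,3,2,3,0,1,0,0,0,1,2,2,1,2,3,2,2,3,3,2,3,0,1,0,0,0,1,2,2,2,1,0,3,0,0,3,2,2,2,3,2,1,0,1,1,0,0,1,0,3,0,0,3,2,2,2,3,2,1,0,1,1,0,3,0,1,2,2,3,2,3,2,2,3,3,2,3,0,1,0,0,0,1,2,2,1,2,3,2,2,3,3,2,3,0,1,0,0,3,0,1,0,3,2,3,2,2,3,3,2,3,0,1,0,0,0,1,2,2,1,2,3,2,2,3,3,2,3,0,1,0,0,0,1,2,2,2]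 := by decide
    rw [e]; exact hwp _
  have hrtr : (finRotate 16) * T * (finRotate 16)⁻¹ ∈ H := by
    have e : (finRotate 16) * T * (finRotate 16)⁻¹ = st8wp [2,1,0,1,2,3,0,3,2,2,2,1,0,1,0,0,1,2,2,3,2,3,2,2,2,3,2,3,0,3,2,1,0,1,2,2,3,2,1,2,1,0,0,3,0,0,1,0,0,1,0,0,3,2,2,2,3,2,2,3,0,0,1,0,3,2,1,0,1,0,3,2,3,0,1,2,3,2,2,1,0,0,1,0,0,0,1,2,2,3,2,2,3,2,2,1,2,2,2,3,0,0,3,2,2,2,3,2,1,0,1,1,0,0,1,0,3,0,0,3,2,2,2,3,2,1,0,1,1,0,0,1,0,0,0,3,0,0,3,2,2,2,3,2,1,0,1,1,0,0,1,0,3,0,0,3,2,2,2,3,2,1,0,1,1,0,0,1,0,0,3,0,0,3,2,2,2,3,2,1,0,1,1,0,0,1,0,3,0,0,3,2,2,2,3,2,1,0,1,1,0,0,1,2,3,2,3,2,2,3,3,2,3,0,1,0,0,0,1,2,2,1,2,3,2,2,3,3,2,3,0,1,0,0,3,2,2,3,3,2,3,0,1,0,0,0,1,2,2,1,2,3,2,2,3,3,2,3,0,1,0,0,0,1,2,2,2]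 := by decide
    rw [e]; exact hwp _
  have hrisri : (finRotate 16)⁻¹ * S * ((finRotate 16)⁻¹)⁻¹ ∈ H := by
    have e : (finRotate 16)⁻¹ * S * ((finRotate 16)⁻¹)⁻¹ = st8wp [0,1,2,2,2,1,0,0,0,3,0,3,0,1,2,1,2,2,3,0,3,3,0,3,2,3,0,1,2,2,2,1,0,1,0,3,2,2,3,2,2,2,1,0,1,0,0,0,0,3,2,3,0,1,0,3,2,3,0,3,2,2,2,1,0,1,0,0,1,2,2,3,0,1,0,0,3,2,2,2,3,2,1,0,1,1,0,0,1,0,3,0,0,3,2,2,2,3,2,1,0,1,1,0,0,0,1,2,2,3,0,0,3,2,2,2,3,2,1,0,1,1,0,0,1,0,3,0,0,3,2,2,2,3,2,1,0,1,1,0,0,1,0,0,0,3,0,0,3,2,2,2,3,2,1,0,1,1,0,0,1,0,3,0,0,3,2,2,2,3,2,1,0,1,1,0,0,1,0,0,3,0,0,3,2,3,0,1,0,0,0,1,2,2,1,2,3,2,2,3,3,2,3,0,1,0,0,0,1,2,2,1,2,3,2,2,3,2,2,1,0,3,0,0,3,2,2,2,3,2,1,0,1,1,0,0,1,0,3,0,0,3,2,2,2,3,2,1,0,1,1,0,0,1,2,3,2,3,2,2,3,3,2,3,0,1,0,0,0,1,2,2,1,2,3,2,2,3,3,2,3,0,1,0,0,0,1,2,3,2,3,2,2,3,3,2,3,0,1,0,0,0,1,2,2,1,2,3,2,2,3,3,2,3,0,1,0,0,0,1,2,2,2]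 := by decide
    rw [e]; exact hwp _
  have hritri : (finRotate 16)⁻¹ * T * ((finRotate 16)⁻¹)⁻¹ ∈ H := by
    have e : (finRotate 16)⁻¹ * T * ((finRotate 16)⁻¹)⁻¹ = st8wp [0,0,1,2,2,2,2,1,0,1,0,0,0,3,0,3,2,1,2,1,0,0,3,2,2,1,2,1,0,0,1,2,1,0,0,0,3,0,3,2,1,2,1,0,0,3,0,3,2,1,2,1,0,3,0,0,3,2,2,2,3,2,1,0,1,2,2,3,0,0,3,2,3,0,1,0,0,0,1,2,2,1,2,2,3,0,0,0,3,2,2,3,3,2,3,0,1,0,0,0,1,2,2,1,2,3,2,2,3,3,2,3,0,1,0,0,0,1,2,2,1,2,2,2,2,3,2,2,2,3,2,1,0,1,1,0,0,1,0,3,0,0,3,2,2,2,3,2,1,0,1,1,0,0,1,0,1,0,0,0,3,2,2,3,3,2,3,0,1,0,0,0,1,2,2,1,2,3,2,2,3,3,2,3,0,1,0,0,0,1,2,2,1,2,2,3,2,3,2,2,3,3,2,3,0,1,0,0,0,1,2,2,1,2,3,2,2,3,3,2,3,0,1,0,0,0,1,2,3,2,3,2,2,3,3,2,3,0,1,0,0,0,1,2,2,1,2,3,2,2,3,3,2,3,0,1,0,0,0,1,2,2]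 := by decide
    rw [e]; exact hwp _
  have hwsw : (Equiv.swap (0 : Fin 16) (finRotate 16 0)) * S * (Equiv.swap (0 : Fin 16) (finRotate 16 0))⁻¹ ∈ H := by
    have e : (Equiv.swap (0 : Fin 16) (finRotate 16 0)) * S * (Equiv.swap (0 : Fin 16) (finRotate 16 0))⁻¹ = st8wp [0,0,1,2,2,2,2,1,0,0,3,0,0,1,2,1,2,2,2,2,2,3,0,3,0,0,0,1,2,1,0,0,3,0,3,2,1,2,1,0,0,3,0,3,2,1,2,1,2,2,3,2,3,0,1,0,0,3,2,1,0,1,2,1,0,1,2,1,2,1,2,3,2,3,0,0,0,3,0,3,0,1,2,1,2,2,3,0,3,0,1,2,1,2,2,1,2,2,2,1,0,0,0,3,0,0,3,0,0,1,0,3,2,1,0,1,2,3,0,3,0,0,0,1,2,2,2,3,2,2,2,1,0,0,3,0,0,1,0,1,2,1,0,0,1,0,1,0,0,3,2,2,3,3,2,3,0,1,0,0,0,1,2,2,1,2,3,2,2,3,3,2,3,0,1,0,0,0,1,2,2,1,2,2,2,2,2,2,2,3,2,2,3,3,2,3,0,1,0,0,0,1,2,2,1,2,3,2,2,3,3,2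,3,0,1,0,0,0,1,2,2,1,0,0,0,3,0,3,2,1,0,0,1,0,3,0,0,3,2,2,2,3,2,1,0,1,1,0,0,1,0,3,0,0,3,2,2,2,3,2,1,0,1,0,3,2,3,0,0,3,0,0,3,2,2,2,3,2,1,0,1,1,0,0,1,0,3,0,0,3,2,2,2,3,2,1,0,1,1,0,0,1,2,3,2,3,2,2,3,3,2,3,0,1,0,0,0,1,2,2,1,2,3,2,2,3,3,2,3,0,1,0,0,0,1,2,3,2,3,2,2,3,3,2,3,0,1,0,0,0,1,2,2,1,2,3,2,2,3,3,2,3,0,1,0,0,0,1,2,2,2] := by decide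
    rw [e]; exact hwp _
  have hwtw : (Equiv.swap (0 : Fin 16) (finRotate 16 0)) * T * (Equiv.swap (0 : Fin 16) (finRotate 16 0))⁻¹ ∈ H := by
    have e : (Equiv.swap (0 : Fin 16) (finRotate 16 0)) * T * (Equiv.swap (0 : Fin 16) (finRotate 16 0))⁻¹ = st8wp [1,0,1,2,2,2,1,2,1,2,1,0,1,0,3,0,3,2,1,2,1,0,3,0,0,1,0,1,2,1,2,2,1,2,3,2,3,0,1,2,1,2,1,0,1,2,3,0,0,1,0,0,1,0,3,0,3,0,0,3,2,2,2,3,2,1,0,1,2,2,3,0,0,3,2,3,0,1,0,0,0,1,2,2,1,2,2,3,0,3,2,2,1,0,0,3,0,0,3,2,2,2,3,2,1,0,1,2,2,1,0,0,3,2,3,0,1,0,0,0,1,2,2,2,3,2,2,3,3,2,3,0,1,0,0,0,1,2,2,1,2,3,2,2,3,3,2,3,0,1,0,0,0,1,2,2,2,2,2,3,2,2,3,3,2,3,0,1,0,0,0,1,2,2,1,2,3,2,2,3,3,2,3,0,1,0,0,0,1,2,2,1,0,3,0,0,3,2,3,0,1,0,0,0,1,2,2,1,2,3,2,2,3,3,2,3,0,1,0,0,0,1,2,2,1,2,3,2,2,3,2,2,1,2,3,2,3,0,1,2,2,3,2,3,2,2,3,3,2,3,0,1,0,0,0,1,2,2,1,2,3,2,2,3,3,2,3,0,1,0,0,3,0,1]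 := by decide
    rw [e]; exact hwp _
  have hwsw2 : (Equiv.swap (0 : Fin 16) (finRotate 16 0))⁻¹ * S * ((Equiv.swap (0 : Fin 16) (finRotate 16 0))⁻¹)⁻¹ ∈ H := by
    have e : (Equiv.swap (0 : Fin 16) (finRotate 16 0))⁻¹ * S * ((Equiv.swap (0 : Fin 16) (finRotate 16 0))⁻¹)⁻¹ = st8wp [0,0,1,2,2,2,2,1,0,0,3,0,0,1,2,1,2,2,2,2,2,3,0,3,0,0,0,1,2,1,0,0,3,0,3,2,1,2,1,0,0,3,0,3,2,1,2,1,2,2,3,2,3,0,1,0,0,3,2,1,0,1,2,1,0,1,2,1,2,1,2,3,2,3,0,0,0,3,0,3,0,1,2,1,2,2,3,0,3,0,1,2,1,2,2,1,2,2,2,1,0,0,0,3,0,0,3,0,0,1,0,3,2,1,0,1,2,3,0,3,0,0,0,1,2,2,2,3,2,2,2,1,0,0,3,0,0,1,0,1,2,1,0,0,1,0,1,0,0,3,2,2,3,3,2,3,0,1,0,0,0,1,2,2,1,2,3,2,2,3,3,2,3,0,1,0,0,0,1,2,2,1,2,2,2,2,2,2,2,3,2,2,3,3,2,3,0,1,0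,0,0,1,2,2,1,2,3,2,2,3,3,2,3,0,1,0,0,0,1,2,2,1,0,0,0,3,0,3,2,1,0,0,1,0,3,0,0,3,2,2,2,3,2,1,0,1,1,0,0,1,0,3,0,0,3,2,2,2,3,2,1,0,1,0,3,2,3,0,0,3,0,0,3,2,2,2,3,2,1,0,1,1,0,0,1,0,3,0,0,3,2,2,2,3,2,1,0,1,1,0,0,1,2,3,2,3,2,2,3,3,2,3,0,1,0,0,0,1,2,2,1,2,3,2,2,3,3,2,3,0,1,0,0,0,1,2,3,2,3,2,2,3,3,2,3,0,1,0,0,0,1,2,2,1,2,3,2,2,3,3,2,3,0,1,0,0,0,1,2,2,2] := by decide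
    rw [e]; exact hwp _
  have hwtw2 : (Equiv.swap (0 : Fin 16) (finRotate 16 0))⁻¹ * T * ((Equiv.swap (0 : Fin 16) (finRotate 16 0))⁻¹)⁻¹ ∈ H := by
    have e : (Equiv.swap (0 : Fin 16) (finRotate 16 0))⁻¹ * T * ((Equiv.swap (0 : Fin 16) (finRotate 16 0))⁻¹)⁻¹ = st8wp [1,0,1,2,2,2,1,2,1,2,1,0,1,0,3,0,3,2,1,2,1,0,3,0,0,1,0,1,2,1,2,2,1,2,3,2,3,0,1,2,1,2,1,0,1,2,3,0,0,1,0,0,1,0,3,0,3,0,0,3,2,2,2,3,2,1,0,1,2,2,3,0,0,3,2,3,0,1,0,0,0,1,2,2,1,2,2,3,0,3,2,2,1,0,0,3,0,0,3,2,2,2,3,2,1,0,1,2,2,1,0,0,3,2,3,0,1,0,0,0,1,2,2,2,3,2,2,3,3,2,3,0,1,0,0,0,1,2,2,1,2,3,2,2,3,3,2,3,0,1,0,0,0,1,2,2,2,2,2,3,2,2,3,3,2,3,0,1,0,0,0,1,2,2,1,2,3,2,2,3,3,2,3,0,1,0,0,0,1,2,2,1,0,3,0,0,3,2,3,0,1,0,0,0,1,2,2,1,2,3,2,2,3,3,2,3,0,1,0,0,0,1,2,2,1,2,3,2,2,3,2,2,1,2,3,2,3,0,1,2,2,3,2,3,2,2,3,3,2,3,0,1,0,0,0,1,2,2,1,2,3,2,2,3,3,2,3,0,1,0,0,3,0,1]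 := by decide
    rw [e]; exact hwp _
  have hc012 : (c[0,1,2] : Perm (Fin 16)) ∈ H := by
    have e : (c[0,1,2] : Perm (Fin 16)) = st8wp [0,1,2,2,2,1,0,0,0,0,0,0,3,2,1,0,0,0,1,0,1,2,1,2,3,0,3,2,2,2,3,2,2,2,1,0,1,2,1,2,3,0,3,0,3,0,3,0,3,2,3,0,3,2,3,0,1,2,2,3,2,1,0,1,0,0,0,3,0,0,3,2,2,2,3,2,1,0,1,2,2,3,0,0,3,2,3,0,1,0,0,0,1,2,2,1,2,2,3,0,0,3,0,0,1,0,0,1,0,0,3,2,2,2,3,2,2,3,0,0,1,0,3,2,1,0,1,2,2,2,2,2,2,3,0,0,3,2,2,2,3,2,1,0,1,1,0,0,1,0,3,0,0,3,2,2,2,3,2,1,0,1,1,0,0,1,0,0,0,3,0,0,3,2,3,0,1,0,0,0,1,2,2,1,2,3,2,2,3,3,2,3,0,1,0,0,0,1,2,2,1,2,3,2,2,3,2,2,1,0,3,0,0,3,2,2,2,3,2,1,0,1,1,0,0,1,0,3,0,0,3,2,2,2,3,2,1,0,1,1,0,3,0,1,2,2,3,2,3,2,2,3,3,2,3,0,1,0,0,0,1,2,2,1,2,3,2,2,3,3,2,3,0,1,0,0,3,0,1,0,3,2,3,2,2,3,3,2,3,0,1,0,0,0,1,2,2,1,2,3,2,2,3,3,2,3,0,1,0,0,0,1,2,2,2]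 := by decide
    rw [e]; exact hwp _
  have key : ∀ g : Perm (Fin 16), g * S * g⁻¹ ∈ H → g * T * g⁻¹ ∈ H →
      ∀ h : Perm (Fin 16), h ∈ H → g * h * g⁻¹ ∈ H := by
    intro g hgs hgt h hh
    have hm : H.map (MulAut.conj g).toMonoidHom ≤ H := by
      rw [hHdef, MonoidHom.map_closure]
      refine (closure_le _).2 ?_
      rintro x ⟨y, hy, rfl⟩
      simp only [Set.mem_insert_iff, Set.mem_singleton_iff] at hy
      rcases hy with rfl | rfl
      · simpa using hgs
      · simpa using hgt
    have hmem : (MulAut.conj g).toMonoidHom h ∈ H.map (MulAut.conj g).toMonoidHom :=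
      Subgroup.mem_map_of_mem _ hh
    have e : (MulAut.conj g).toMonoidHom h = g * h * g⁻¹ := by simp
    rw [e] at hmem
    exact hm hmem
  have hr : finRotate 16 ∈ Subgroup.normalizer (H : Set (Perm (Fin 16))) := by
    rw [Subgroup.mem_normalizer_iff]
    intro h
    constructor
    · intro hh; exact key _ hrsr hrtr h hh
    · intro hh
      have h2 := key _ hrisri hritri _ hh
      have e : (finRotate 16)⁻¹ * (finRotate 16 * h * (finRotate 16)⁻¹) * ((finRotate 16)⁻¹)⁻¹ = h := by
        group
      rwa [e] at h2
  have hswn : Equiv.swap (0 : Fin 16) (finRotate 16 0) ∈ Subgroup.normalizer (H : Set (Perm (Fin 16))) := by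
    rw [Subgroup.mem_normalizer_iff]
    intro h
    constructor
    · intro hh; exact key _ hwsw hwtw h hh
    · intro hh
      have h2 := key _ hwsw2 hwtw2 _ hh
      have e : (Equiv.swap (0 : Fin 16) (finRotate 16 0))⁻¹ *
          (Equiv.swap (0 : Fin 16) (finRotate 16 0) * h * (Equiv.swap (0 : Fin 16) (finRotate 16 0))⁻¹) *
          ((Equiv.swap (0 : Fin 16) (finRotate 16 0))⁻¹)⁻¹ = h := by group
      rwa [e] at h2
  have htop : Subgroup.normalizer (H : Set (Perm (Fin 16))) = ⊤ := by
    rw [eq_top_iff, ← closure_cycle_adjacent_swap (isCycle_finRotate_of_le (by norm_num))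
      (support_finRotate_of_le (by norm_num)) 0]
    refine (closure_le _).2 ?_
    rintro x hx
    simp only [Set.mem_insert_iff, Set.mem_singleton_iff] at hx
    rcases hx with rfl | rfl
    · exact hr
    · exact hswn
  have hnormal : H.Normal := Subgroup.normalizer_eq_top_iff.1 htop
  have hc0T : (c[0,1,2] : Perm (Fin 16)).cycleType = {3} := by
    have h3 : ((c[0,1,2] : Perm (Fin 16)).support.card = 3) := by decide
    exact (card_support_eq_three_iff.1 h3)
  refine le_antisymm ?_ ?_
  · rw [hHdef, closure_le]
    rintro x hx
    simp only [Set.mem_insert_iff, Set.mem_singleton_iff] at hx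
    rcases hx with rfl | rfl
    · exact mem_alternatingGroup.2 (by decide)
    · exact mem_alternatingGroup.2 (by decide)
  · rw [← closure_three_cycles_eq_alternating]
    refine (closure_le _).2 ?_
    intro x hx
    have hx' : (x : Perm (Fin 16)).cycleType = {3} := hx
    have hconj : IsConj (c[0,1,2] : Perm (Fin 16)) x :=
      isConj_iff_cycleType_eq.2 (hc0T.trans hx'.symm)
    obtain ⟨g, hg⟩ := isConj_iff.1 hconj
    rw [← hg]
    exact hnormal.conj_mem _ hc012 g

theorem stmt8 :
    let s : Equiv.Perm (Fin 16) := c[1,2,3,4,5,6,7] * c[8,9,10,11,12,13,14]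
    let t : Equiv.Perm (Fin 16) := c[1,3] * c[4,6] * c[7,8] * c[9,13] * c[10,15] * c[11,16]
    orderOf (s * t) = 6 ∧ Subgroup.closure {s, t} = alternatingGroup (Fin 16) := by
  intro s t
  exact ⟨st8order, st8main⟩
end

section
/- Let s = (1 2 3 4 5 6 7)(8 9 10 11 12 13 14) and t = (1 8)(2 4)(5 6)(9 10) be permutations of {1,...,14}. Then s·t has order 10 and ⟨s,t⟩ = A₁₄. -/
open Equiv

namespace Stmt9Aux

open Equiv.Perm Subgroup

def sf : Equiv.Perm (Fin 14) := ⟨![8,2,3,4,5,6,7,1,9,10,11,12,13,0], ![13,7,1,2,3,4,5,6,0,8,9,10,11,12], by decide, by decide⟩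

def tf : Equiv.Perm (Fin 14) := ⟨![0,8,4,3,2,6,5,7,1,10,9,11,12,13], ![0,8,4,3,2,6,5,7,1,10,9,11,12,13], by decide, by decide⟩

def tauf : Equiv.Perm (Fin 14) := ⟨![0,1,2,3,4,5,6,8,11,9,10,7,12,13], ![0,1,2,3,4,5,6,11,7,9,10,8,12,13], by decide, by decide⟩

def E (k : Fin 14) : Equiv.Perm (Fin 14) := Equiv.swap 1 2 * Equiv.swap 2 k

def w1 (u v : Fin 14) : List (Fin 14 × Bool) :=
  if u = 2 then [(v, false)] else if v = 2 then [(u, true)] else [(v, false), (u, true)]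

def w2 (u v : Fin 14) : List (Fin 14 × Bool) := [(v, true), (u, false)]

def wcyc (x y z : Fin 14) : List (Fin 14 × Bool) :=
  if x = 1 then w1 y z else if y = 1 then w1 z x else if z = 1 then w1 x y
  else if x = 2 then w2 y z else if y = 2 then w2 z x else if z = 2 then w2 x y
  else [(x, false), (z, true), (y, false), (x, true)]

def wrd (a b c : Fin 14) : List (Fin 14 × Bool) := if b = c then [] else wcyc a c b

def evalE (l : List (Fin 14 × Bool)) : Equiv.Perm (Fin 14) :=
  (l.map fun p => cond p.2 (E p.1)⁻¹ (E p.1)).prod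

set_option maxRecDepth 100000 in
set_option maxHeartbeats 4000000 in
theorem key : ∀ a b c : Fin 14, a < b → b < c →
    (Equiv.swap a b * Equiv.swap a c = evalE (wrd a b c) ∧
      ∀ p ∈ wrd a b c, p.1 ≠ 1 ∧ p.1 ≠ 2) := by decide

theorem rot {α : Type*} [DecidableEq α] {x y z : α} (hxy : x ≠ y) (hxz : x ≠ z) (hyz : y ≠ z) :
    Equiv.swap x y * Equiv.swap x z = Equiv.swap z x * Equiv.swap z y := by
  ext w
  simp only [Equiv.Perm.coe_mul, Function.comp_apply, Equiv.swap_apply_def]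
  split_ifs <;> simp_all

set_option maxRecDepth 100000 in
set_option maxHeartbeats 4000000 in
theorem main :
    let s : Equiv.Perm (Fin 14) := c[1,2,3,4,5,6,7] * c[8,9,10,11,12,13,14]
    let t : Equiv.Perm (Fin 14) := c[1,8] * c[2,4] * c[5,6] * c[9,10]
    orderOf (s * t) = 10 ∧ Subgroup.closure {s, t} = alternatingGroup (Fin 14) := by
  intro s t
  have hseq : s = sf := by decide
  have hteq : t = tf := by decide
  rw [hseq, hteq]
  set H : Subgroup (Equiv.Perm (Fin 14)) := Subgroup.closure {sf, tf} with hH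
  have hs : sf ∈ H := subset_closure (Set.mem_insert _ _)
  have ht : tf ∈ H := subset_closure (Set.mem_insert_of_mem _ rfl)
  have htau : tauf ∈ H := by
    rw [show tauf = (sf*sf*sf*tf*sf*tf)^8 from by decide]
    exact pow_mem (mul_mem (mul_mem (mul_mem (mul_mem (mul_mem hs hs) hs) ht) hs) ht) 8
  have h3 : E 3 ∈ H := by
    have hpi : (tf*sf*tf*sf*sf*sf*tf) ∈ H := (mul_mem (mul_mem (mul_mem (mul_mem (mul_mem (mul_mem ht hs) ht) hs) hs) hs) ht)
    have he : E 3 = (tf*sf*tf*sf*sf*sf*tf) * tauf * (tf*sf*tf*sf*sf*sf*tf)⁻¹ := by decide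
    rw [he]; exact mul_mem (mul_mem hpi htau) (inv_mem hpi)
  have h4 : E 4 ∈ H := by
    have hpi : (sf*sf*tf*sf⁻¹*tf*sf*sf*tf*sf*sf*tf) ∈ H := (mul_mem (mul_mem (mul_mem (mul_mem (mul_mem (mul_mem (mul_mem (mul_mem (mul_mem (mul_mem hs hs) ht) (inv_mem hs)) ht) hs) hs) ht) hs) hs) ht)
    have he : E 4 = (sf*sf*tf*sf⁻¹*tf*sf*sf*tf*sf*sf*tf) * tauf * (sf*sf*tf*sf⁻¹*tf*sf*sf*tf*sf*sf*tf)⁻¹ := by decide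
    rw [he]; exact mul_mem (mul_mem hpi htau) (inv_mem hpi)
  have h5 : E 5 ∈ H := by
    have hpi : (tf*sf⁻¹*tf*sf⁻¹*sf⁻¹*tf*sf⁻¹*sf⁻¹*sf⁻¹) ∈ H := (mul_mem (mul_mem (mul_mem (mul_mem (mul_mem (mul_mem (mul_mem (mul_mem ht (inv_mem hs)) ht) (inv_mem hs)) (inv_mem hs)) ht) (inv_mem hs)) (inv_mem hs)) (inv_mem hs))
    have he : E 5 = (tf*sf⁻¹*tf*sf⁻¹*sf⁻¹*tf*sf⁻¹*sf⁻¹*sf⁻¹) * tauf * (tf*sf⁻¹*tf*sf⁻¹*sf⁻¹*tf*sf⁻¹*sf⁻¹*sf⁻¹)⁻¹ := by decide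
    rw [he]; exact mul_mem (mul_mem hpi htau) (inv_mem hpi)
  have h6 : E 6 ∈ H := by
    have hpi : (tf*sf⁻¹*sf⁻¹*sf⁻¹*tf*sf*sf*sf*tf*sf*tf) ∈ H := (mul_mem (mul_mem (mul_mem (mul_mem (mul_mem (mul_mem (mul_mem (mul_mem (mul_mem (mul_mem ht (inv_mem hs)) (inv_mem hs)) (inv_mem hs)) ht) hs) hs) hs) ht) hs) ht)
    have he : E 6 = (tf*sf⁻¹*sf⁻¹*sf⁻¹*tf*sf*sf*sf*tf*sf*tf) * tauf * (tf*sf⁻¹*sf⁻¹*sf⁻¹*tf*sf*sf*sf*tf*sf*tf)⁻¹ := by decide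
    rw [he]; exact mul_mem (mul_mem hpi htau) (inv_mem hpi)
  have h7 : E 7 ∈ H := by
    have hpi : (sf⁻¹*tf*sf*tf*sf*sf*sf*tf) ∈ H := (mul_mem (mul_mem (mul_mem (mul_mem (mul_mem (mul_mem (mul_mem (inv_mem hs) ht) hs) ht) hs) hs) hs) ht)
    have he : E 7 = (sf⁻¹*tf*sf*tf*sf*sf*sf*tf) * tauf * (sf⁻¹*tf*sf*tf*sf*sf*sf*tf)⁻¹ := by decide
    rw [he]; exact mul_mem (mul_mem hpi htau) (inv_mem hpi)
  have h8 : E 8 ∈ H := by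
    have hpi : (tf*sf*sf*tf*sf⁻¹*sf⁻¹*tf*sf⁻¹*tf*sf⁻¹*sf⁻¹*sf⁻¹*tf) ∈ H := (mul_mem (mul_mem (mul_mem (mul_mem (mul_mem (mul_mem (mul_mem (mul_mem (mul_mem (mul_mem (mul_mem (mul_mem ht hs) hs) ht) (inv_mem hs)) (inv_mem hs)) ht) (inv_mem hs)) ht) (inv_mem hs)) (inv_mem hs)) (inv_mem hs)) ht)
    have he : E 8 = (tf*sf*sf*tf*sf⁻¹*sf⁻¹*tf*sf⁻¹*tf*sf⁻¹*sf⁻¹*sf⁻¹*tf) * tauf * (tf*sf*sf*tf*sf⁻¹*sf⁻¹*tf*sf⁻¹*tf*sf⁻¹*sf⁻¹*sf⁻¹*tf)⁻¹ := by decide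
    rw [he]; exact mul_mem (mul_mem hpi htau) (inv_mem hpi)
  have h9 : E 9 ∈ H := by
    have hpi : (tf*sf⁻¹*sf⁻¹*tf*sf⁻¹*tf*sf⁻¹*sf⁻¹) ∈ H := (mul_mem (mul_mem (mul_mem (mul_mem (mul_mem (mul_mem (mul_mem ht (inv_mem hs)) (inv_mem hs)) ht) (inv_mem hs)) ht) (inv_mem hs)) (inv_mem hs))
    have he : E 9 = (tf*sf⁻¹*sf⁻¹*tf*sf⁻¹*tf*sf⁻¹*sf⁻¹) * tauf * (tf*sf⁻¹*sf⁻¹*tf*sf⁻¹*tf*sf⁻¹*sf⁻¹)⁻¹ := by decide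
    rw [he]; exact mul_mem (mul_mem hpi htau) (inv_mem hpi)
  have h10 : E 10 ∈ H := by
    have hpi : (sf*sf*tf*sf⁻¹*tf*sf⁻¹*sf⁻¹*sf⁻¹*tf) ∈ H := (mul_mem (mul_mem (mul_mem (mul_mem (mul_mem (mul_mem (mul_mem (mul_mem hs hs) ht) (inv_mem hs)) ht) (inv_mem hs)) (inv_mem hs)) (inv_mem hs)) ht)
    have he : E 10 = (sf*sf*tf*sf⁻¹*tf*sf⁻¹*sf⁻¹*sf⁻¹*tf) * tauf * (sf*sf*tf*sf⁻¹*tf*sf⁻¹*sf⁻¹*sf⁻¹*tf)⁻¹ := by decide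
    rw [he]; exact mul_mem (mul_mem hpi htau) (inv_mem hpi)
  have h11 : E 11 ∈ H := by
    have hpi : (tf*sf⁻¹*sf⁻¹*tf*sf⁻¹*sf⁻¹) ∈ H := (mul_mem (mul_mem (mul_mem (mul_mem (mul_mem ht (inv_mem hs)) (inv_mem hs)) ht) (inv_mem hs)) (inv_mem hs))
    have he : E 11 = (tf*sf⁻¹*sf⁻¹*tf*sf⁻¹*sf⁻¹) * tauf * (tf*sf⁻¹*sf⁻¹*tf*sf⁻¹*sf⁻¹)⁻¹ := by decide
    rw [he]; exact mul_mem (mul_mem hpi htau) (inv_mem hpi)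
  have h12 : E 12 ∈ H := by
    have hpi : (sf*tf) ∈ H := (mul_mem hs ht)
    have he : E 12 = (sf*tf) * tauf * (sf*tf)⁻¹ := by decide
    rw [he]; exact mul_mem (mul_mem hpi htau) (inv_mem hpi)
  have h13 : E 13 ∈ H := by
    have hpi : (tf*sf⁻¹*tf*sf*sf*tf*sf*tf) ∈ H := (mul_mem (mul_mem (mul_mem (mul_mem (mul_mem (mul_mem (mul_mem ht (inv_mem hs)) ht) hs) hs) ht) hs) ht)
    have he : E 13 = (tf*sf⁻¹*tf*sf*sf*tf*sf*tf) * tauf * (tf*sf⁻¹*tf*sf*sf*tf*sf*tf)⁻¹ := by decide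
    rw [he]; exact mul_mem (mul_mem hpi htau) (inv_mem hpi)
  have h14 : E 14 ∈ H := by
    have hpi : (tf*sf⁻¹*tf*sf*tf*sf⁻¹*tf) ∈ H := (mul_mem (mul_mem (mul_mem (mul_mem (mul_mem (mul_mem ht (inv_mem hs)) ht) hs) ht) (inv_mem hs)) ht)
    have he : E 14 = (tf*sf⁻¹*tf*sf*tf*sf⁻¹*tf) * tauf * (tf*sf⁻¹*tf*sf*tf*sf⁻¹*tf)⁻¹ := by decide
    rw [he]; exact mul_mem (mul_mem hpi htau) (inv_mem hpi)
  have hE : ∀ k : Fin 14, k ≠ 1 → k ≠ 2 → E k ∈ H := by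
    intro k hk1 hk2
    fin_cases k
    · exact h14
    · exact absurd rfl hk1
    · exact absurd rfl hk2
    · exact h3
    · exact h4
    · exact h5
    · exact h6
    · exact h7
    · exact h8
    · exact h9
    · exact h10
    · exact h11
    · exact h12
    · exact h13
  have hEval : ∀ l : List (Fin 14 × Bool), (∀ p ∈ l, p.1 ≠ 1 ∧ p.1 ≠ 2) → evalE l ∈ H := by
    intro l
    induction l with
    | nil => intro _; exact one_mem _
    | cons p l ih =>
      intro hl
      have hp := hl p List.mem_cons_self
      have h1 : (cond p.2 (E p.1)⁻¹ (E p.1)) ∈ H := by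
        cases p.2
        · exact hE _ hp.1 hp.2
        · exact inv_mem (hE _ hp.1 hp.2)
      have h2 := ih fun q hq => hl q (List.mem_cons_of_mem _ hq)
      rw [evalE, List.map_cons, List.prod_cons]
      exact mul_mem h1 h2
  have keylt : ∀ a b c : Fin 14, a < b → b < c → Equiv.swap a b * Equiv.swap a c ∈ H := by
    intro a b c h1 h2
    obtain ⟨h1, h2⟩ := key a b c h1 h2
    rw [h1]; exact hEval _ h2
  have swinv : ∀ x y z : Fin 14,
      (Equiv.swap x y * Equiv.swap x z)⁻¹ = Equiv.swap x z * Equiv.swap x y := fun x y z => by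
    rw [mul_inv_rev, Equiv.swap_inv, Equiv.swap_inv]
  have mem3 : ∀ a b c : Fin 14, a ≠ b → a ≠ c → Equiv.swap a b * Equiv.swap a c ∈ H := by
    intro a b c hab hac
    by_cases hbc : b = c
    · subst hbc; rw [Equiv.swap_mul_self]; exact one_mem _
    · rcases lt_trichotomy a b with h1 | rfl | h1
      · rcases lt_trichotomy b c with h2 | rfl | h2
        · exact keylt a b c h1 h2
        · exact absurd rfl hbc
        · rcases lt_trichotomy a c with h3 | rfl | h3
          · rw [show Equiv.swap a b * Equiv.swap a c =
                (Equiv.swap a c * Equiv.swap a b)⁻¹ from (swinv a c b).symm]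
            exact inv_mem (keylt a c b h3 h2)
          · exact absurd rfl hac
          · rw [rot hab hac hbc]
            exact keylt c a b h3 h1
      · exact absurd rfl hab
      · rcases lt_trichotomy a c with h3 | rfl | h3
        · rw [show Equiv.swap a b * Equiv.swap a c =
              (Equiv.swap b a * Equiv.swap b c)⁻¹ from by
            rw [← rot hac hab fun h => hbc h.symm, swinv]]
          exact inv_mem (keylt b a c h1 h3)
        · exact absurd rfl hac
        · rcases lt_trichotomy b c with h2 | rfl | h2
          · rw [rot hab hac hbc, rot (Ne.symm hac) (fun h => hbc h.symm) hab]
            exact keylt b c a h2 h3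
          · exact absurd rfl hbc
          · rw [rot hab hac hbc, show Equiv.swap c a * Equiv.swap c b =
                (Equiv.swap c b * Equiv.swap c a)⁻¹ from (swinv c b a).symm]
            exact inv_mem (keylt c b a h2 h1)
  have hswap2 : ∀ σ τ : Equiv.Perm (Fin 14), IsSwap σ → IsSwap τ → σ * τ ∈ H := by
    rintro _ _ ⟨a, b, ab, rfl⟩ ⟨c, d, cd, rfl⟩
    by_cases ac : a = c
    · subst ac; exact mem3 a b d ab cd
    · have h' : Equiv.swap a b * Equiv.swap c d =
          Equiv.swap a b * Equiv.swap a c * (Equiv.swap c a * Equiv.swap c d) := by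
        simp [Equiv.swap_comm c a, mul_assoc]
      rw [h']
      exact mul_mem (mem3 a b c ab ac) (mem3 c a d (Ne.symm ac) cd)
  have hA : alternatingGroup (Fin 14) ≤ H := by
    intro σ hσ
    suffices hind : ∀ (n : ℕ) (l : List (Equiv.Perm (Fin 14))) (_ : ∀ g ∈ l, IsSwap g)
        (_ : l.length = 2 * n), l.prod ∈ H by
      obtain ⟨l, rfl, hl⟩ := truncSwapFactors σ
      obtain ⟨n, hn⟩ := (prod_list_swap_mem_alternatingGroup_iff_even_length hl).1 hσ
      rw [← two_mul] at hn
      exact hind n l hl hn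
    intro n
    induction n with
    | zero => intro l _ hn; simp [List.length_eq_zero_iff.1 hn, one_mem]
    | succ n ih =>
      intro l hl hn
      rw [Nat.mul_succ] at hn
      obtain ⟨a, l, rfl⟩ := l.exists_of_length_succ hn
      rw [List.length_cons, Nat.succ_inj] at hn
      obtain ⟨b, l, rfl⟩ := l.exists_of_length_succ hn
      rw [List.prod_cons, List.prod_cons, ← mul_assoc]
      rw [List.length_cons, Nat.succ_inj] at hn
      exact mul_mem
        (hswap2 a b (hl a List.mem_cons_self) (hl b (List.mem_cons_of_mem a List.mem_cons_self)))
        (ih _ (fun g hg => hl g (List.mem_cons_of_mem _ (List.mem_cons_of_mem _ hg))) hn)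
  constructor
  · rw [orderOf_eq_iff (by norm_num)]
    constructor
    · decide
    · intro m hm hm0
      interval_cases m <;> decide
  · refine le_antisymm ((closure_le _).2 ?_) hA
    rintro x hx
    rcases hx with rfl | rfl
    · exact Equiv.Perm.mem_alternatingGroup.2 (by decide)
    · exact Equiv.Perm.mem_alternatingGroup.2 (by decide)

end Stmt9Aux

theorem stmt9 :
    let s : Equiv.Perm (Fin 14) := c[1,2,3,4,5,6,7] * c[8,9,10,11,12,13,14]
    let t : Equiv.Perm (Fin 14) := c[1,8] * c[2,4] * c[5,6] * c[9,10]
    orderOf (s * t) = 10 ∧ Subgroup.closure {s, t} = alternatingGroup (Fin 14) := by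
  exact Stmt9Aux.main
end

section
/- Let s = (1 2 3 4 5 6 7)(8 9 10 11 12 13 14) and t = (1 8)(2 3)(4 5)(6 15)(7 16)(9 17)(10 12)(13 14) be permutations of {1,...,17}. Then s·t has order 12 and ⟨s,t⟩ = A₁₇. -/
open Equiv

set_option maxRecDepth 100000

set_option maxHeartbeats 1000000

private def SS : Perm (Fin 17) := c[1,2,3,4,5,6,7] * c[8,9,10,11,12,13,14]
private def TT : Perm (Fin 17) := c[1,8] * c[2,3] * c[4,5] * c[6,15] * c[7,16] * c[9,17] * c[10,12] * c[13,14]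

private lemma ordST : orderOf (SS * TT) = 12 := by
  have h : SS * TT = (c[17,10,13,8,2,4,6,15,7,16,1,9] * c[11,12] : Perm (Fin 17)) := by decide
  rw [h, orderOf_eq_iff (by norm_num)]
  constructor
  · decide
  · decide

private lemma cls : Subgroup.closure {SS, TT} = alternatingGroup (Fin 17) := by
  apply le_antisymm
  · rw [Subgroup.closure_le]
    rintro σ (rfl | rfl)
    · exact Perm.mem_alternatingGroup.2 (by decide)
    · exact Perm.mem_alternatingGroup.2 (by decide)
  · set H := Subgroup.closure ({SS, TT} : Set (Perm (Fin 17))) with hH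
    have hs : SS ∈ H := Subgroup.subset_closure (Set.mem_insert _ _)
    have ht : TT ∈ H := Subgroup.subset_closure (Set.mem_insert_of_mem _ rfl)
    have e1 : SS^3 * TT⁻¹ = (c[17,12,13,10,8,4,1,11,14,9] * c[2,6,15] * c[3,5,7,16] : Perm (Fin 17)) := by decide
    have e2 : (c[17,12,13,10,8,4,1,11,14,9] * c[2,6,15] * c[3,5,7,16] : Perm (Fin 17))^4 = (c[17,8,14,13,1] * c[2,6,15] * c[4,9,10,11,12] : Perm (Fin 17)) := by decide
    have e3 : (c[17,8,14,13,1] * c[2,6,15] * c[4,9,10,11,12] : Perm (Fin 17))^5 = (c[2,15,6] : Perm (Fin 17)) := by decide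
    have hc0 : (c[2,15,6] : Perm (Fin 17)) ∈ H := by
      rw [← e3, ← e2, ← e1]
      exact pow_mem (pow_mem (mul_mem (pow_mem hs 3) (inv_mem ht)) 4) 5
    have hg3 : swap 1 2 * swap 2 (3:Fin 17) ∈ H := by
      have hw : (SS⁻¹ * TT * SS * TT * SS * TT * SS⁻¹ * SS⁻¹ * TT * SS * SS * TT * SS) ∈ H := mul_mem (mul_mem (mul_mem (mul_mem (mul_mem (mul_mem (mul_mem (mul_mem (mul_mem (mul_mem (mul_mem (mul_mem (inv_mem hs) ht) hs) ht) hs) ht) (inv_mem hs)) (inv_mem hs)) ht) hs) hs) ht) hs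
      have hm : (SS⁻¹ * TT * SS * TT * SS * TT * SS⁻¹ * SS⁻¹ * TT * SS * SS * TT * SS) = (c[17,11,4,6,3] * c[1,15,2] * c[8,12,13,16] * c[9,10] : Perm (Fin 17)) := by decide
      rw [hm] at hw
      have e : (c[17,11,4,6,3] * c[1,15,2] * c[8,12,13,16] * c[9,10] : Perm (Fin 17)) * (c[2,15,6] : Perm (Fin 17)) * (c[17,11,4,6,3] * c[1,15,2] * c[8,12,13,16] * c[9,10] : Perm (Fin 17))⁻¹ = swap 1 2 * swap 2 (3:Fin 17) := by decide
      rw [← e]; exact mul_mem (mul_mem hw hc0) (inv_mem hw)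
    have hg4 : swap 1 2 * swap 2 (4:Fin 17) ∈ H := by
      have hw : (SS⁻¹ * SS⁻¹ * TT * SS⁻¹ * TT) ∈ H := mul_mem (mul_mem (mul_mem (mul_mem (inv_mem hs) (inv_mem hs)) ht) (inv_mem hs)) ht
      have hm : (SS⁻¹ * SS⁻¹ * TT * SS⁻¹ * TT) = (c[17,6,4,3,13,12] * c[1,11,10,9,14,8,16,15,2] * c[5,7] : Perm (Fin 17)) := by decide
      rw [hm] at hw
      have e : (c[17,6,4,3,13,12] * c[1,11,10,9,14,8,16,15,2] * c[5,7] : Perm (Fin 17)) * (c[2,15,6] : Perm (Fin 17)) * (c[17,6,4,3,13,12] * c[1,11,10,9,14,8,16,15,2] * c[5,7] : Perm (Fin 17))⁻¹ = swap 1 2 * swap 2 (4:Fin 17) := by decide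
      rw [← e]; exact mul_mem (mul_mem hw hc0) (inv_mem hw)
    have hg5 : swap 1 2 * swap 2 (5:Fin 17) ∈ H := by
      have hw : (SS * SS * TT * SS⁻¹ * TT * SS * SS * SS * TT * SS⁻¹ * TT) ∈ H := mul_mem (mul_mem (mul_mem (mul_mem (mul_mem (mul_mem (mul_mem (mul_mem (mul_mem (mul_mem hs hs) ht) (inv_mem hs)) ht) hs) hs) hs) ht) (inv_mem hs)) ht
      have hm : (SS * SS * TT * SS⁻¹ * TT * SS * SS * SS * TT * SS⁻¹ * TT) = (c[17,7,10,12,3,14,9] * c[1,11,16,6,5,4,8,15,2] : Perm (Fin 17)) := by decide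
      rw [hm] at hw
      have e : (c[17,7,10,12,3,14,9] * c[1,11,16,6,5,4,8,15,2] : Perm (Fin 17)) * (c[2,15,6] : Perm (Fin 17)) * (c[17,7,10,12,3,14,9] * c[1,11,16,6,5,4,8,15,2] : Perm (Fin 17))⁻¹ = swap 1 2 * swap 2 (5:Fin 17) := by decide
      rw [← e]; exact mul_mem (mul_mem hw hc0) (inv_mem hw)
    have hg6 : swap 1 2 * swap 2 (6:Fin 17) ∈ H := by
      have hw : (SS⁻¹ * TT * SS⁻¹ * SS⁻¹ * TT * SS * TT * SS⁻¹ * TT) ∈ H := mul_mem (mul_mem (mul_mem (mul_mem (mul_mem (mul_mem (mul_mem (mul_mem (inv_mem hs) ht) (inv_mem hs)) (inv_mem hs)) ht) hs) ht) (inv_mem hs)) ht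
      have hm : (SS⁻¹ * TT * SS⁻¹ * SS⁻¹ * TT * SS * TT * SS⁻¹ * TT) = (c[17,14] * c[1,10,7,13,15,2] * c[3,8] * c[4,5,16] * c[9,11] : Perm (Fin 17)) := by decide
      rw [hm] at hw
      have e : (c[17,14] * c[1,10,7,13,15,2] * c[3,8] * c[4,5,16] * c[9,11] : Perm (Fin 17)) * (c[2,15,6] : Perm (Fin 17)) * (c[17,14] * c[1,10,7,13,15,2] * c[3,8] * c[4,5,16] * c[9,11] : Perm (Fin 17))⁻¹ = swap 1 2 * swap 2 (6:Fin 17) := by decide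
      rw [← e]; exact mul_mem (mul_mem hw hc0) (inv_mem hw)
    have hg7 : swap 1 2 * swap 2 (7:Fin 17) ∈ H := by
      have hw : (SS * SS * TT * SS * TT * SS * SS * SS * TT * SS⁻¹ * TT) ∈ H := mul_mem (mul_mem (mul_mem (mul_mem (mul_mem (mul_mem (mul_mem (mul_mem (mul_mem (mul_mem hs hs) ht) hs) ht) hs) hs) hs) ht) (inv_mem hs)) ht
      have hm : (SS * SS * TT * SS * TT * SS * SS * SS * TT * SS⁻¹ * TT) = (c[17,15,2,1,11,5,6,7,4] * c[3,12,14] * c[8,10] * c[9,13] : Perm (Fin 17)) := by decide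
      rw [hm] at hw
      have e : (c[17,15,2,1,11,5,6,7,4] * c[3,12,14] * c[8,10] * c[9,13] : Perm (Fin 17)) * (c[2,15,6] : Perm (Fin 17)) * (c[17,15,2,1,11,5,6,7,4] * c[3,12,14] * c[8,10] * c[9,13] : Perm (Fin 17))⁻¹ = swap 1 2 * swap 2 (7:Fin 17) := by decide
      rw [← e]; exact mul_mem (mul_mem hw hc0) (inv_mem hw)
    have hg8 : swap 1 2 * swap 2 (8:Fin 17) ∈ H := by
      have hw : (SS * SS * SS * TT * SS⁻¹ * SS⁻¹ * SS⁻¹ * TT * SS⁻¹ * TT * SS * SS * TT * SS * TT) ∈ H := mul_mem (mul_mem (mul_mem (mul_mem (mul_mem (mul_mem (mul_mem (mul_mem (mul_mem (mul_mem (mul_mem (mul_mem (mul_mem (mul_mem hs hs) hs) ht) (inv_mem hs)) (inv_mem hs)) (inv_mem hs)) ht) (inv_mem hs)) ht) hs) hs) ht) hs) ht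
      have hm : (SS * SS * SS * TT * SS⁻¹ * SS⁻¹ * SS⁻¹ * TT * SS⁻¹ * TT * SS * SS * TT * SS * TT) = (c[17,9] * c[1,7,16,4,11,12,14,3,6,8,15,2] : Perm (Fin 17)) := by decide
      rw [hm] at hw
      have e : (c[17,9] * c[1,7,16,4,11,12,14,3,6,8,15,2] : Perm (Fin 17)) * (c[2,15,6] : Perm (Fin 17)) * (c[17,9] * c[1,7,16,4,11,12,14,3,6,8,15,2] : Perm (Fin 17))⁻¹ = swap 1 2 * swap 2 (8:Fin 17) := by decide
      rw [← e]; exact mul_mem (mul_mem hw hc0) (inv_mem hw)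
    have hg9 : swap 1 2 * swap 2 (9:Fin 17) ∈ H := by
      have hw : (TT * SS⁻¹ * TT * SS * TT * SS * TT * SS⁻¹ * TT * SS) ∈ H := mul_mem (mul_mem (mul_mem (mul_mem (mul_mem (mul_mem (mul_mem (mul_mem (mul_mem ht (inv_mem hs)) ht) hs) ht) hs) ht) (inv_mem hs)) ht) hs
      have hm : (TT * SS⁻¹ * TT * SS * TT * SS * TT * SS⁻¹ * TT * SS) = (c[17,5,15,2,1,6,9,12,3,4,8,14,13] * c[7,10,16] : Perm (Fin 17)) := by decide
      rw [hm] at hw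
      have e : (c[17,5,15,2,1,6,9,12,3,4,8,14,13] * c[7,10,16] : Perm (Fin 17)) * (c[2,15,6] : Perm (Fin 17)) * (c[17,5,15,2,1,6,9,12,3,4,8,14,13] * c[7,10,16] : Perm (Fin 17))⁻¹ = swap 1 2 * swap 2 (9:Fin 17) := by decide
      rw [← e]; exact mul_mem (mul_mem hw hc0) (inv_mem hw)
    have hg10 : swap 1 2 * swap 2 (10:Fin 17) ∈ H := by
      have hw : (SS⁻¹ * TT * SS⁻¹ * SS⁻¹ * TT * SS⁻¹ * TT * SS * SS) ∈ H := mul_mem (mul_mem (mul_mem (mul_mem (mul_mem (mul_mem (mul_mem (mul_mem (inv_mem hs) ht) (inv_mem hs)) (inv_mem hs)) ht) (inv_mem hs)) ht) hs) hs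
      have hm : (SS⁻¹ * TT * SS⁻¹ * SS⁻¹ * TT * SS⁻¹ * TT * SS * SS) = (c[17,15,2,1,13,6,10,8] * c[3,16,5] * c[7,14,12] * c[9,11] : Perm (Fin 17)) := by decide
      rw [hm] at hw
      have e : (c[17,15,2,1,13,6,10,8] * c[3,16,5] * c[7,14,12] * c[9,11] : Perm (Fin 17)) * (c[2,15,6] : Perm (Fin 17)) * (c[17,15,2,1,13,6,10,8] * c[3,16,5] * c[7,14,12] * c[9,11] : Perm (Fin 17))⁻¹ = swap 1 2 * swap 2 (10:Fin 17) := by decide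
      rw [← e]; exact mul_mem (mul_mem hw hc0) (inv_mem hw)
    have hg11 : swap 1 2 * swap 2 (11:Fin 17) ∈ H := by
      have hw : (SS * SS * SS * TT * SS * SS) ∈ H := mul_mem (mul_mem (mul_mem (mul_mem (mul_mem hs hs) hs) ht) hs) hs
      have hm : (SS * SS * SS * TT * SS * SS) = (c[17,12,9,14] * c[1,5,16,3,7,6,11,10,13,4,15,2] : Perm (Fin 17)) := by decide
      rw [hm] at hw
      have e : (c[17,12,9,14] * c[1,5,16,3,7,6,11,10,13,4,15,2] : Perm (Fin 17)) * (c[2,15,6] : Perm (Fin 17)) * (c[17,12,9,14] * c[1,5,16,3,7,6,11,10,13,4,15,2] : Perm (Fin 17))⁻¹ = swap 1 2 * swap 2 (11:Fin 17) := by decide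
      rw [← e]; exact mul_mem (mul_mem hw hc0) (inv_mem hw)
    have hg12 : swap 1 2 * swap 2 (12:Fin 17) ∈ H := by
      have hw : (SS⁻¹ * SS⁻¹ * SS⁻¹ * TT * SS * TT * SS * SS * SS * TT * SS) ∈ H := mul_mem (mul_mem (mul_mem (mul_mem (mul_mem (mul_mem (mul_mem (mul_mem (mul_mem (mul_mem (inv_mem hs) (inv_mem hs)) (inv_mem hs)) ht) hs) ht) hs) hs) hs) ht) hs
      have hm : (SS⁻¹ * SS⁻¹ * SS⁻¹ * TT * SS * TT * SS * SS * SS * TT * SS) = (c[17,8,9,7,14,15,2,1,3] * c[5,16,6,12,11] : Perm (Fin 17)) := by decide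
      rw [hm] at hw
      have e : (c[17,8,9,7,14,15,2,1,3] * c[5,16,6,12,11] : Perm (Fin 17)) * (c[2,15,6] : Perm (Fin 17)) * (c[17,8,9,7,14,15,2,1,3] * c[5,16,6,12,11] : Perm (Fin 17))⁻¹ = swap 1 2 * swap 2 (12:Fin 17) := by decide
      rw [← e]; exact mul_mem (mul_mem hw hc0) (inv_mem hw)
    have hg13 : swap 1 2 * swap 2 (13:Fin 17) ∈ H := by
      have hw : (SS * TT * SS * TT * SS⁻¹ * SS⁻¹ * TT * SS * TT * SS * TT * SS * TT * SS) ∈ H := mul_mem (mul_mem (mul_mem (mul_mem (mul_mem (mul_mem (mul_mem (mul_mem (mul_mem (mul_mem (mul_mem (mul_mem (mul_mem hs ht) hs) ht) (inv_mem hs)) (inv_mem hs)) ht) hs) ht) hs) ht) hs) ht) hs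
      have hm : (SS * TT * SS * TT * SS⁻¹ * SS⁻¹ * TT * SS * TT * SS * TT * SS * TT * SS) = (c[17,7,8,12,3,9] * c[1,15,2] * c[4,6,13,11,10] * c[14,16] : Perm (Fin 17)) := by decide
      rw [hm] at hw
      have e : (c[17,7,8,12,3,9] * c[1,15,2] * c[4,6,13,11,10] * c[14,16] : Perm (Fin 17)) * (c[2,15,6] : Perm (Fin 17)) * (c[17,7,8,12,3,9] * c[1,15,2] * c[4,6,13,11,10] * c[14,16] : Perm (Fin 17))⁻¹ = swap 1 2 * swap 2 (13:Fin 17) := by decide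
      rw [← e]; exact mul_mem (mul_mem hw hc0) (inv_mem hw)
    have hg14 : swap 1 2 * swap 2 (14:Fin 17) ∈ H := by
      have hw : (SS⁻¹ * TT * SS⁻¹ * TT * SS⁻¹ * SS⁻¹ * TT * SS⁻¹ * TT * SS⁻¹ * SS⁻¹) ∈ H := mul_mem (mul_mem (mul_mem (mul_mem (mul_mem (mul_mem (mul_mem (mul_mem (mul_mem (mul_mem (inv_mem hs) ht) (inv_mem hs)) ht) (inv_mem hs)) (inv_mem hs)) ht) (inv_mem hs)) ht) (inv_mem hs)) (inv_mem hs)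
      have hm : (SS⁻¹ * TT * SS⁻¹ * TT * SS⁻¹ * SS⁻¹ * TT * SS⁻¹ * TT * SS⁻¹ * SS⁻¹) = (c[17,5,13,10,15,2,1,4,12,8] * c[3,11,9,16] * c[6,14,7] : Perm (Fin 17)) := by decide
      rw [hm] at hw
      have e : (c[17,5,13,10,15,2,1,4,12,8] * c[3,11,9,16] * c[6,14,7] : Perm (Fin 17)) * (c[2,15,6] : Perm (Fin 17)) * (c[17,5,13,10,15,2,1,4,12,8] * c[3,11,9,16] * c[6,14,7] : Perm (Fin 17))⁻¹ = swap 1 2 * swap 2 (14:Fin 17) := by decide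
      rw [← e]; exact mul_mem (mul_mem hw hc0) (inv_mem hw)
    have hg15 : swap 1 2 * swap 2 (15:Fin 17) ∈ H := by
      have hw : (SS⁻¹ * TT * SS⁻¹ * TT * SS * SS * SS * TT * SS) ∈ H := mul_mem (mul_mem (mul_mem (mul_mem (mul_mem (mul_mem (mul_mem (mul_mem (inv_mem hs) ht) (inv_mem hs)) ht) hs) hs) hs) ht) hs
      have hm : (SS⁻¹ * TT * SS⁻¹ * TT * SS * SS * SS * TT * SS) = (c[1,5,3,12,10,9,16,14,4,6,15,2] * c[7,11,13,8] : Perm (Fin 17)) := by decide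
      rw [hm] at hw
      have e : (c[1,5,3,12,10,9,16,14,4,6,15,2] * c[7,11,13,8] : Perm (Fin 17)) * (c[2,15,6] : Perm (Fin 17)) * (c[1,5,3,12,10,9,16,14,4,6,15,2] * c[7,11,13,8] : Perm (Fin 17))⁻¹ = swap 1 2 * swap 2 (15:Fin 17) := by decide
      rw [← e]; exact mul_mem (mul_mem hw hc0) (inv_mem hw)
    have hg16 : swap 1 2 * swap 2 (16:Fin 17) ∈ H := by
      have hw : (TT * SS⁻¹ * SS⁻¹ * TT * SS⁻¹ * TT * SS⁻¹ * TT * SS⁻¹ * SS⁻¹ * TT) ∈ H := mul_mem (mul_mem (mul_mem (mul_mem (mul_mem (mul_mem (mul_mem (mul_mem (mul_mem (mul_mem ht (inv_mem hs)) (inv_mem hs)) ht) (inv_mem hs)) ht) (inv_mem hs)) ht) (inv_mem hs)) (inv_mem hs)) ht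
      have hm : (TT * SS⁻¹ * SS⁻¹ * TT * SS⁻¹ * TT * SS⁻¹ * TT * SS⁻¹ * SS⁻¹ * TT) = (c[17,9,7,5,8,3,6,16,14] * c[1,10,12,4,11,15,2] : Perm (Fin 17)) := by decide
      rw [hm] at hw
      have e : (c[17,9,7,5,8,3,6,16,14] * c[1,10,12,4,11,15,2] : Perm (Fin 17)) * (c[2,15,6] : Perm (Fin 17)) * (c[17,9,7,5,8,3,6,16,14] * c[1,10,12,4,11,15,2] : Perm (Fin 17))⁻¹ = swap 1 2 * swap 2 (16:Fin 17) := by decide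
      rw [← e]; exact mul_mem (mul_mem hw hc0) (inv_mem hw)
    have hg17 : swap 1 2 * swap 2 (17:Fin 17) ∈ H := by
      have hw : (TT * SS⁻¹ * TT * SS⁻¹ * TT * SS * TT * SS⁻¹ * TT * SS * TT * SS * TT * SS) ∈ H := mul_mem (mul_mem (mul_mem (mul_mem (mul_mem (mul_mem (mul_mem (mul_mem (mul_mem (mul_mem (mul_mem (mul_mem (mul_mem ht (inv_mem hs)) ht) (inv_mem hs)) ht) hs) ht) (inv_mem hs)) ht) hs) ht) hs) ht) hs
      have hm : (TT * SS⁻¹ * TT * SS⁻¹ * TT * SS * TT * SS⁻¹ * TT * SS * TT * SS * TT * SS) = (c[17,7,3,8,9,6] * c[1,15,2] * c[4,13,11,16,12,5,10,14] : Perm (Fin 17)) := by decide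
      rw [hm] at hw
      have e : (c[17,7,3,8,9,6] * c[1,15,2] * c[4,13,11,16,12,5,10,14] : Perm (Fin 17)) * (c[2,15,6] : Perm (Fin 17)) * (c[17,7,3,8,9,6] * c[1,15,2] * c[4,13,11,16,12,5,10,14] : Perm (Fin 17))⁻¹ = swap 1 2 * swap 2 (17:Fin 17) := by decide
      rw [← e]; exact mul_mem (mul_mem hw hc0) (inv_mem hw)
    have hG : ∀ k : Fin 17, k ≠ 1 → k ≠ 2 → swap 1 2 * swap 2 k ∈ H := by
      intro k hk1 hk2
      fin_cases k
      · exact hg17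
      · exact absurd rfl (by assumption)
      · exact absurd rfl (by assumption)
      · exact hg3
      · exact hg4
      · exact hg5
      · exact hg6
      · exact hg7
      · exact hg8
      · exact hg9
      · exact hg10
      · exact hg11
      · exact hg12
      · exact hg13
      · exact hg14
      · exact hg15
      · exact hg16
    have hA : ∀ x y : Fin 17, x ≠ 1 → x ≠ 2 → y ≠ 1 → y ≠ 2 → x ≠ y → swap 1 x * swap x y ∈ H := by
      have key : ∀ x y : Fin 17, x ≠ 1 ∧ x ≠ 2 ∧ y ≠ 1 ∧ y ≠ 2 ∧ x ≠ y →
          swap 1 x * swap x y = (swap 1 2 * swap 2 y) * (swap 1 2 * swap 2 x)⁻¹ := by decide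
      intro x y hx1 hx2 hy1 hy2 hxy
      rw [key x y ⟨hx1, hx2, hy1, hy2, hxy⟩]
      exact mul_mem (hG y hy1 hy2) (inv_mem (hG x hx1 hx2))
    have hB : ∀ x y : Fin 17, x ≠ 1 → x ≠ 2 → y ≠ 1 → y ≠ 2 → x ≠ y → swap 2 x * swap x y ∈ H := by
      have key : ∀ x y : Fin 17, x ≠ 1 ∧ x ≠ 2 ∧ y ≠ 1 ∧ y ≠ 2 ∧ x ≠ y →
          swap 2 x * swap x y = (swap 1 2 * swap 2 y)⁻¹ * (swap 1 2 * swap 2 x) := by decide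
      intro x y hx1 hx2 hy1 hy2 hxy
      rw [key x y ⟨hx1, hx2, hy1, hy2, hxy⟩]
      exact mul_mem (inv_mem (hG y hy1 hy2)) (hG x hx1 hx2)
    have k1 : ∀ b : Fin 17, b ≠ 1 ∧ b ≠ 2 → swap 1 b * swap b 2 = (swap 1 2 * swap 2 b)⁻¹ := by decide
    have k2 : ∀ c : Fin 17, c ≠ 1 ∧ c ≠ 2 → swap 2 1 * swap 1 c = (swap 1 2 * swap 2 c)⁻¹ := by decide
    have k3 : ∀ a : Fin 17, a ≠ 1 ∧ a ≠ 2 → swap a 1 * swap 1 2 = swap 1 2 * swap 2 a := by decide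
    have k4 : ∀ a c : Fin 17, a ≠ 1 ∧ c ≠ 1 ∧ a ≠ c → swap a 1 * swap 1 c = swap 1 c * swap c a := by decide
    have k5 : ∀ b : Fin 17, b ≠ 1 ∧ b ≠ 2 → swap 2 b * swap b 1 = swap 1 2 * swap 2 b := by decide
    have k6 : ∀ a : Fin 17, a ≠ 1 ∧ a ≠ 2 → swap a 2 * swap 2 1 = (swap 1 2 * swap 2 a)⁻¹ := by decide
    have k7 : ∀ a b : Fin 17, a ≠ 1 ∧ b ≠ 1 ∧ a ≠ b → swap a b * swap b 1 = swap 1 a * swap a b := by decide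
    have k8 : ∀ a c : Fin 17, a ≠ 2 ∧ c ≠ 2 ∧ a ≠ c → swap a 2 * swap 2 c = swap 2 c * swap c a := by decide
    have k9 : ∀ a b : Fin 17, a ≠ 2 ∧ b ≠ 2 ∧ a ≠ b → swap a b * swap b 2 = swap 2 a * swap a b := by decide
    have k10 : ∀ a b c : Fin 17, a ≠ 1 ∧ b ≠ 1 ∧ c ≠ 1 ∧ a ≠ b ∧ b ≠ c ∧ a ≠ c →
        swap a b * swap b c = (swap 1 a * swap a b) * (swap 1 b * swap b c) := by
      rintro a b c ⟨ha1, hb1, _, hab, _, _⟩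
      have h : swap a b * swap (1:Fin 17) b * (swap a b)⁻¹ = swap 1 a := by
        rw [← swap_apply_apply, swap_apply_of_ne_of_ne (Ne.symm ha1) (Ne.symm hb1),
          swap_apply_right]
      have h2 : swap a b * swap (1:Fin 17) b = swap 1 a * swap a b := by
        rw [← h]; group
      rw [mul_assoc, ← mul_assoc (swap a b), h2, ← mul_assoc, ← mul_assoc,
        swap_mul_self, one_mul]
    have T1 : ∀ a b c : Fin 17, a ≠ b → b ≠ c → a ≠ c → swap a b * swap b c ∈ H := by
      intro a b c hab hbc hac
      rcases eq_or_ne a 1 with rfl | ha1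
      · rcases eq_or_ne b 2 with rfl | hb2
        · exact hG c (Ne.symm hac) (Ne.symm hbc)
        · rcases eq_or_ne c 2 with rfl | hc2
          · rw [k1 b ⟨Ne.symm hab, hb2⟩]
            exact inv_mem (hG b (Ne.symm hab) hb2)
          · exact hA b c (Ne.symm hab) hb2 (Ne.symm hac) hc2 hbc
      · rcases eq_or_ne b 1 with rfl | hb1
        · rcases eq_or_ne a 2 with rfl | ha2
          · rw [k2 c ⟨Ne.symm hbc, Ne.symm hac⟩]
            exact inv_mem (hG c (Ne.symm hbc) (Ne.symm hac))
          · rcases eq_or_ne c 2 with rfl | hc2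
            · rw [k3 a ⟨hab, ha2⟩]
              exact hG a hab ha2
            · rw [k4 a c ⟨hab, Ne.symm hbc, hac⟩]
              exact hA c a (Ne.symm hbc) hc2 hab ha2 (Ne.symm hac)
        · rcases eq_or_ne c 1 with rfl | hc1
          · rcases eq_or_ne a 2 with rfl | ha2
            · rw [k5 b ⟨hbc, Ne.symm hab⟩]
              exact hG b hbc (Ne.symm hab)
            · rcases eq_or_ne b 2 with rfl | hb2
              · rw [k6 a ⟨ha1, ha2⟩]
                exact inv_mem (hG a ha1 ha2)
              · rw [k7 a b ⟨ha1, hb1, hab⟩]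
                exact hA a b ha1 ha2 hb1 hb2 hab
          · rcases eq_or_ne a 2 with rfl | ha2
            · exact hB b c hb1 (Ne.symm hab) hc1 (Ne.symm hac) hbc
            · rcases eq_or_ne b 2 with rfl | hb2
              · rw [k8 a c ⟨ha2, Ne.symm hbc, hac⟩]
                exact hB c a hc1 (Ne.symm hbc) ha1 ha2 (Ne.symm hac)
              · rcases eq_or_ne c 2 with rfl | hc2
                · rw [k9 a b ⟨ha2, hb2, hab⟩]
                  exact hB a b ha1 ha2 hb1 hb2 hab
                · rw [k10 a b c ⟨ha1, hb1, hc1, hab, hbc, hac⟩]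
                  exact mul_mem (hA a b ha1 ha2 hb1 hb2 hab) (hA b c hb1 hb2 hc1 hc2 hbc)
    have SW : ∀ f g : Perm (Fin 17), f.IsSwap → g.IsSwap → f * g ∈ H := by
      rintro f g ⟨a, b, hab, rfl⟩ ⟨c, d, hcd, rfl⟩
      rcases eq_or_ne b c with rfl | hbc
      · rcases eq_or_ne a d with rfl | had
        · rw [swap_comm b a, swap_mul_self]; exact one_mem H
        · exact T1 a b d hab hcd had
      · rcases eq_or_ne b d with rfl | hbd
        · rcases eq_or_ne a c with rfl | hac
          · rw [swap_comm a b, swap_mul_self]; exact one_mem H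
          · rw [swap_comm c b]; exact T1 a b c hab hbc hac
        · rcases eq_or_ne a c with rfl | hac
          · rw [swap_comm a b]; exact T1 b a d (Ne.symm hab) hcd hbd
          · rcases eq_or_ne a d with rfl | had
            · rw [swap_comm a b, swap_comm c a]; exact T1 b a c (Ne.symm hab) hac hbc
            · have e : swap a b * swap c d = (swap a b * swap b c) * (swap b c * swap c d) := by
                rw [mul_assoc, ← mul_assoc (swap b c), swap_mul_self, one_mul]
              rw [e]
              exact mul_mem (T1 a b c hab hbc hac) (T1 b c d hbc hcd hbd)
    intro σ hσ
    suffices hind : ∀ (m : ℕ) (l : List (Perm (Fin 17))), (∀ g ∈ l, Perm.IsSwap g) →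
        l.length = 2 * m → l.prod ∈ H by
      obtain ⟨l, rfl, hl⟩ := Perm.truncSwapFactors σ
      obtain ⟨m, hm⟩ := (Perm.prod_list_swap_mem_alternatingGroup_iff_even_length hl).1 hσ
      rw [← two_mul] at hm
      exact hind m l hl hm
    intro m
    induction m with
    | zero => intro l _ hl; simp [List.length_eq_zero_iff.1 hl, one_mem]
    | succ m ih =>
      intro l hl hn
      rw [Nat.mul_succ] at hn
      obtain ⟨a, l, rfl⟩ := l.exists_of_length_succ hn
      rw [List.length_cons, Nat.succ_inj] at hn
      obtain ⟨b, l, rfl⟩ := l.exists_of_length_succ hn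
      rw [List.prod_cons, List.prod_cons, ← mul_assoc]
      rw [List.length_cons, Nat.succ_inj] at hn
      exact mul_mem
        (SW a b (hl a (List.mem_cons_self (a := a))) (hl b (List.mem_cons_of_mem a (List.mem_cons_self (a := b) (l := l)))))
        (ih _ (fun g hg => hl g (List.mem_cons_of_mem _ (List.mem_cons_of_mem _ hg))) hn)

theorem stmt10 :
    let s : Equiv.Perm (Fin 17) := c[1,2,3,4,5,6,7] * c[8,9,10,11,12,13,14]
    let t : Equiv.Perm (Fin 17) := c[1,8] * c[2,3] * c[4,5] * c[6,15] * c[7,16] * c[9,17] * c[10,12] * c[13,14]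
    orderOf (s * t) = 12 ∧ Subgroup.closure {s, t} = alternatingGroup (Fin 17) := by
  intro s t
  exact ⟨ordST, cls⟩
end

section
/- Let s = (1 2 3 4 5 6 7 8 9)(10 11 12) and t = (1 10)(2 12)(3 13)(4 14)(5 15)(6 16) be permutations of {1,...,16}. Then s has order 9, s·t has order 14, and ⟨s,t⟩ = A₁₆. -/
set_option maxRecDepth 40000

open Equiv

private def S16 : Perm (Fin 16) := c[1,2,3,4,5,6,7,8,9] * c[10,11,12]
private def T16 : Perm (Fin 16) := c[1,10] * c[2,12] * c[3,13] * c[4,14] * c[5,15] * c[6,16]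
private def H16 : Subgroup (Perm (Fin 16)) := Subgroup.closure {S16, T16}
private def E1 : Perm (Fin 16) := c[0,15,14,13,10,1,3,4,5,6,7] * c[2,12,11]
private def E2 : Perm (Fin 16) := c[0,14,10,3,5,7,15,13,1,4,6] * c[2,11,12]
private def E4 : Perm (Fin 16) := c[0,10,5,15,1,6,14,3,7,13,4] * c[2,12,11]
private def E8 : Perm (Fin 16) := c[0,5,1,14,7,4,10,15,6,3,13] * c[2,11,12]
private def F2 : Perm (Fin 16) := c[0,8,1,12,13,14,15] * c[3,4,5,6,7,9,11]
private def F3 : Perm (Fin 16) := c[0,9,12,4,15,7,1,3,14,6,8,11,13,5] * c[2,10]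
private def F6 : Perm (Fin 16) := c[0,12,15,1,14,8,13] * c[3,6,11,5,9,4,7]
private def F7 : Perm (Fin 16) := c[0,3] * c[1,5] * c[2,10] * c[4,8] * c[6,12] * c[7,13] * c[9,14] * c[11,15]

private lemma lemA {a b c : Fin 16} (hac : a ≠ c) (hbc : b ≠ c) :
    swap a b * swap b c = swap a c * swap a b := by
  have h := swap_apply_apply (swap a b) b c
  rw [swap_apply_right, swap_apply_of_ne_of_ne hac.symm hbc.symm, swap_inv] at h
  rw [h, mul_assoc, swap_mul_self, mul_one]

private lemma lemB {u a b : Fin 16} (hua : u ≠ a) (hub : u ≠ b) (hab : a ≠ b) :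
    swap u a * swap u b * swap u a = swap a b := by
  have h := swap_apply_apply (swap u a) u b
  rw [swap_apply_left, swap_apply_of_ne_of_ne hub.symm hab.symm, swap_inv] at h
  exact h.symm

private lemma eq_swap_swap {σ : Perm (Fin 16)} {x y z : Fin 16} (hxy : x ≠ y) (hxz : x ≠ z)
    (hyz : y ≠ z) (hs : σ.support = {x, y, z}) (h1 : σ x = y) (h2 : σ y = z) (h3 : σ z = x) :
    σ = swap x y * swap y z := by
  ext w
  rcases eq_or_ne w x with rfl | hwx
  · rw [Perm.mul_apply, swap_apply_of_ne_of_ne hxy hxz, swap_apply_left, h1]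
  rcases eq_or_ne w y with rfl | hwy
  · rw [Perm.mul_apply, swap_apply_left, swap_apply_of_ne_of_ne hxz.symm hyz.symm, h2]
  rcases eq_or_ne w z with rfl | hwz
  · rw [Perm.mul_apply, swap_apply_right, swap_apply_right, h3]
  have hfix : σ w = w := by
    refine Perm.notMem_support.mp ?_
    rw [hs]
    simp [hwx, hwy, hwz]
  rw [Perm.mul_apply, swap_apply_of_ne_of_ne hwy hwz, swap_apply_of_ne_of_ne hwx hwy, hfix]

private lemma threeCycle_mem {σ : Perm (Fin 16)} (hσ : σ.IsThreeCycle) : σ ∈ H16 := by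
  have hS : S16 ∈ H16 := Subgroup.subset_closure (Set.mem_insert _ _)
  have hT : T16 ∈ H16 := Subgroup.subset_closure (Set.mem_insert_of_mem _ rfl)
  have hg0 : (c[2,11,12] : Perm (Fin 16)) ∈ H16 := by
    have d1 : S16 * T16 * S16⁻¹ * T16 = E1 := by decide
    have d2 : E1 ^ 2 = E2 := by rw [pow_two]; decide
    have d4 : E1 ^ 4 = E4 := by rw [show (4:ℕ) = 2*2 from rfl, pow_mul, d2, pow_two]; decide
    have d8 : E1 ^ 8 = E8 := by rw [show (8:ℕ) = 4*2 from rfl, pow_mul, d4, pow_two]; decide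
    have d11 : (S16 * T16 * S16⁻¹ * T16) ^ 11 = c[2,11,12] := by
      rw [d1, show (11:ℕ) = 8+2+1 from rfl, pow_add, pow_add, d8, d2, pow_one]; decide
    rw [← d11]
    exact pow_mem (mul_mem (mul_mem (mul_mem hS hT) (inv_mem hS)) hT) 11
  have h_0 : swap 1 2 * swap 1 (0 : Fin 16) ∈ H16 := by
    have hw : (T16 * S16 * S16 * S16 * S16 : Perm (Fin 16)) ∈ H16 := (mul_mem (mul_mem (mul_mem (mul_mem hT hS) hS) hS) hS)
    have e : (T16 * S16 * S16 * S16 * S16) * c[2,11,12] * (T16 * S16 * S16 * S16 * S16)⁻¹ = swap 1 2 * swap 1 (0 : Fin 16) := by decide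
    exact e ▸ mul_mem (mul_mem hw hg0) (inv_mem hw)
  have h_3 : swap 1 2 * swap 1 (3 : Fin 16) ∈ H16 := by
    have hw : (S16 * T16 * S16⁻¹ * S16⁻¹ : Perm (Fin 16)) ∈ H16 := (mul_mem (mul_mem (mul_mem hS hT) (inv_mem hS)) (inv_mem hS))
    have e : (S16 * T16 * S16⁻¹ * S16⁻¹) * c[2,11,12] * (S16 * T16 * S16⁻¹ * S16⁻¹)⁻¹ = swap 1 2 * swap 1 (3 : Fin 16) := by decide
    exact e ▸ mul_mem (mul_mem hw hg0) (inv_mem hw)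
  have h_4 : swap 1 2 * swap 1 (4 : Fin 16) ∈ H16 := by
    have hw : (T16 * S16⁻¹ * T16 * S16 * T16 * S16⁻¹ * T16 * S16 * T16 : Perm (Fin 16)) ∈ H16 := (mul_mem (mul_mem (mul_mem (mul_mem (mul_mem (mul_mem (mul_mem (mul_mem hT (inv_mem hS)) hT) hS) hT) (inv_mem hS)) hT) hS) hT)
    have e : (T16 * S16⁻¹ * T16 * S16 * T16 * S16⁻¹ * T16 * S16 * T16) * c[2,11,12] * (T16 * S16⁻¹ * T16 * S16 * T16 * S16⁻¹ * T16 * S16 * T16)⁻¹ = swap 1 2 * swap 1 (4 : Fin 16) := by decide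
    exact e ▸ mul_mem (mul_mem hw hg0) (inv_mem hw)
  have h_5 : swap 1 2 * swap 1 (5 : Fin 16) ∈ H16 := by
    have hw : (S16 * S16 * T16 * S16⁻¹ * S16⁻¹ * T16 * S16 : Perm (Fin 16)) ∈ H16 := (mul_mem (mul_mem (mul_mem (mul_mem (mul_mem (mul_mem hS hS) hT) (inv_mem hS)) (inv_mem hS)) hT) hS)
    have e : (S16 * S16 * T16 * S16⁻¹ * S16⁻¹ * T16 * S16) * c[2,11,12] * (S16 * S16 * T16 * S16⁻¹ * S16⁻¹ * T16 * S16)⁻¹ = swap 1 2 * swap 1 (5 : Fin 16) := by decide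
    exact e ▸ mul_mem (mul_mem hw hg0) (inv_mem hw)
  have h_6 : swap 1 2 * swap 1 (6 : Fin 16) ∈ H16 := by
    have hw : (S16 * S16 * S16 * T16 * S16⁻¹ * S16⁻¹ * S16⁻¹ * T16 * S16 : Perm (Fin 16)) ∈ H16 := (mul_mem (mul_mem (mul_mem (mul_mem (mul_mem (mul_mem (mul_mem (mul_mem hS hS) hS) hT) (inv_mem hS)) (inv_mem hS)) (inv_mem hS)) hT) hS)
    have e : (S16 * S16 * S16 * T16 * S16⁻¹ * S16⁻¹ * S16⁻¹ * T16 * S16) * c[2,11,12] * (S16 * S16 * S16 * T16 * S16⁻¹ * S16⁻¹ * S16⁻¹ * T16 * S16)⁻¹ = swap 1 2 * swap 1 (6 : Fin 16) := by decide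
    exact e ▸ mul_mem (mul_mem hw hg0) (inv_mem hw)
  have h_7 : swap 1 2 * swap 1 (7 : Fin 16) ∈ H16 := by
    have hw : (S16⁻¹ * S16⁻¹ * T16 * S16⁻¹ * S16⁻¹ * S16⁻¹ * T16 * S16 * S16 * T16 * S16 : Perm (Fin 16)) ∈ H16 := (mul_mem (mul_mem (mul_mem (mul_mem (mul_mem (mul_mem (mul_mem (mul_mem (mul_mem (mul_mem (inv_mem hS) (inv_mem hS)) hT) (inv_mem hS)) (inv_mem hS)) (inv_mem hS)) hT) hS) hS) hT) hS)
    have e : (S16⁻¹ * S16⁻¹ * T16 * S16⁻¹ * S16⁻¹ * S16⁻¹ * T16 * S16 * S16 * T16 * S16) * c[2,11,12] * (S16⁻¹ * S16⁻¹ * T16 * S16⁻¹ * S16⁻¹ * S16⁻¹ * T16 * S16 * S16 * T16 * S16)⁻¹ = swap 1 2 * swap 1 (7 : Fin 16) := by decide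
    exact e ▸ mul_mem (mul_mem hw hg0) (inv_mem hw)
  have h_8 : swap 1 2 * swap 1 (8 : Fin 16) ∈ H16 := by
    have hw : (S16⁻¹ * T16 * S16⁻¹ * S16⁻¹ * S16⁻¹ * T16 * S16 * T16 * S16 : Perm (Fin 16)) ∈ H16 := (mul_mem (mul_mem (mul_mem (mul_mem (mul_mem (mul_mem (mul_mem (mul_mem (inv_mem hS) hT) (inv_mem hS)) (inv_mem hS)) (inv_mem hS)) hT) hS) hT) hS)
    have e : (S16⁻¹ * T16 * S16⁻¹ * S16⁻¹ * S16⁻¹ * T16 * S16 * T16 * S16) * c[2,11,12] * (S16⁻¹ * T16 * S16⁻¹ * S16⁻¹ * S16⁻¹ * T16 * S16 * T16 * S16)⁻¹ = swap 1 2 * swap 1 (8 : Fin 16) := by decide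
    exact e ▸ mul_mem (mul_mem hw hg0) (inv_mem hw)
  have h_9 : swap 1 2 * swap 1 (9 : Fin 16) ∈ H16 := by
    have hw : (T16 * S16⁻¹ * S16⁻¹ : Perm (Fin 16)) ∈ H16 := (mul_mem (mul_mem hT (inv_mem hS)) (inv_mem hS))
    have e : (T16 * S16⁻¹ * S16⁻¹) * c[2,11,12] * (T16 * S16⁻¹ * S16⁻¹)⁻¹ = swap 1 2 * swap 1 (9 : Fin 16) := by decide
    exact e ▸ mul_mem (mul_mem hw hg0) (inv_mem hw)
  have h_10 : swap 1 2 * swap 1 (10 : Fin 16) ∈ H16 := by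
    have hw : (S16 * T16 * S16⁻¹ * S16⁻¹ * T16 * S16 * T16 * S16 * S16 : Perm (Fin 16)) ∈ H16 := (mul_mem (mul_mem (mul_mem (mul_mem (mul_mem (mul_mem (mul_mem (mul_mem hS hT) (inv_mem hS)) (inv_mem hS)) hT) hS) hT) hS) hS)
    have e : (S16 * T16 * S16⁻¹ * S16⁻¹ * T16 * S16 * T16 * S16 * S16) * c[2,11,12] * (S16 * T16 * S16⁻¹ * S16⁻¹ * T16 * S16 * T16 * S16 * S16)⁻¹ = swap 1 2 * swap 1 (10 : Fin 16) := by decide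
    exact e ▸ mul_mem (mul_mem hw hg0) (inv_mem hw)
  have h_11 : swap 1 2 * swap 1 (11 : Fin 16) ∈ H16 := by
    have hw : (S16⁻¹ * S16⁻¹ * T16 * S16⁻¹ * S16⁻¹ * T16 * S16 * S16 * T16 * S16 : Perm (Fin 16)) ∈ H16 := (mul_mem (mul_mem (mul_mem (mul_mem (mul_mem (mul_mem (mul_mem (mul_mem (mul_mem (inv_mem hS) (inv_mem hS)) hT) (inv_mem hS)) (inv_mem hS)) hT) hS) hS) hT) hS)
    have e : (S16⁻¹ * S16⁻¹ * T16 * S16⁻¹ * S16⁻¹ * T16 * S16 * S16 * T16 * S16) * c[2,11,12] * (S16⁻¹ * S16⁻¹ * T16 * S16⁻¹ * S16⁻¹ * T16 * S16 * S16 * T16 * S16)⁻¹ = swap 1 2 * swap 1 (11 : Fin 16) := by decide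
    exact e ▸ mul_mem (mul_mem hw hg0) (inv_mem hw)
  have h_12 : swap 1 2 * swap 1 (12 : Fin 16) ∈ H16 := by
    have hw : (S16 * S16 * T16 * S16⁻¹ * T16 * S16⁻¹ * S16⁻¹ : Perm (Fin 16)) ∈ H16 := (mul_mem (mul_mem (mul_mem (mul_mem (mul_mem (mul_mem hS hS) hT) (inv_mem hS)) hT) (inv_mem hS)) (inv_mem hS))
    have e : (S16 * S16 * T16 * S16⁻¹ * T16 * S16⁻¹ * S16⁻¹) * c[2,11,12] * (S16 * S16 * T16 * S16⁻¹ * T16 * S16⁻¹ * S16⁻¹)⁻¹ = swap 1 2 * swap 1 (12 : Fin 16) := by decide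
    exact e ▸ mul_mem (mul_mem hw hg0) (inv_mem hw)
  have h_13 : swap 1 2 * swap 1 (13 : Fin 16) ∈ H16 := by
    have hw : (T16 * S16 : Perm (Fin 16)) ∈ H16 := (mul_mem hT hS)
    have e : (T16 * S16) * c[2,11,12] * (T16 * S16)⁻¹ = swap 1 2 * swap 1 (13 : Fin 16) := by decide
    exact e ▸ mul_mem (mul_mem hw hg0) (inv_mem hw)
  have h_14 : swap 1 2 * swap 1 (14 : Fin 16) ∈ H16 := by
    have hw : (T16 * S16 * T16 * S16⁻¹ * T16 * S16 * T16 * S16 : Perm (Fin 16)) ∈ H16 := (mul_mem (mul_mem (mul_mem (mul_mem (mul_mem (mul_mem (mul_mem hT hS) hT) (inv_mem hS)) hT) hS) hT) hS)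
    have e : (T16 * S16 * T16 * S16⁻¹ * T16 * S16 * T16 * S16) * c[2,11,12] * (T16 * S16 * T16 * S16⁻¹ * T16 * S16 * T16 * S16)⁻¹ = swap 1 2 * swap 1 (14 : Fin 16) := by decide
    exact e ▸ mul_mem (mul_mem hw hg0) (inv_mem hw)
  have h_15 : swap 1 2 * swap 1 (15 : Fin 16) ∈ H16 := by
    have hw : (S16⁻¹ * S16⁻¹ * T16 * S16 * S16 * T16 * S16 * S16 * T16 * S16 : Perm (Fin 16)) ∈ H16 := (mul_mem (mul_mem (mul_mem (mul_mem (mul_mem (mul_mem (mul_mem (mul_mem (mul_mem (inv_mem hS) (inv_mem hS)) hT) hS) hS) hT) hS) hS) hT) hS)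
    have e : (S16⁻¹ * S16⁻¹ * T16 * S16 * S16 * T16 * S16 * S16 * T16 * S16) * c[2,11,12] * (S16⁻¹ * S16⁻¹ * T16 * S16 * S16 * T16 * S16 * S16 * T16 * S16)⁻¹ = swap 1 2 * swap 1 (15 : Fin 16) := by decide
    exact e ▸ mul_mem (mul_mem hw hg0) (inv_mem hw)
  have hp2 : ∀ k : Fin 16, k ≠ 1 → k ≠ 2 → swap 1 2 * swap 1 k ∈ H16 := by
    intro k h1 h2
    fin_cases k
    · exact h_0
    · exact absurd rfl h1
    · exact absurd rfl h2
    · exact h_3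
    · exact h_4
    · exact h_5
    · exact h_6
    · exact h_7
    · exact h_8
    · exact h_9
    · exact h_10
    · exact h_11
    · exact h_12
    · exact h_13
    · exact h_14
    · exact h_15
  have hpk : ∀ x y : Fin 16, x ≠ 1 → y ≠ 1 → x ≠ y → swap 1 x * swap 1 y ∈ H16 := by
    intro x y hx1 hy1 hxy
    rcases eq_or_ne x 2 with rfl | hx2
    · exact hp2 y hy1 (Ne.symm hxy)
    rcases eq_or_ne y 2 with rfl | hy2
    · have e : swap 1 x * swap 1 (2 : Fin 16) = (swap 1 2 * swap 1 x)⁻¹ := by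
        rw [mul_inv_rev, swap_inv, swap_inv]
      rw [e]
      exact inv_mem (hp2 x hx1 hx2)
    have e : swap 1 x * swap 1 y = (swap 1 x * swap 1 2) * (swap 1 2 * swap 1 y) := by
      rw [mul_assoc (swap 1 x), ← mul_assoc (swap 1 2), swap_mul_self, one_mul]
    have m1 : swap 1 x * swap 1 2 ∈ H16 := by
      have h := inv_mem (hp2 x hx1 hx2)
      rwa [mul_inv_rev, swap_inv, swap_inv] at h
    rw [e]
    exact mul_mem m1 (hp2 y hy1 hy2)
  have key : ∀ x y z : Fin 16, x ≠ y → y ≠ z → x ≠ z → swap x y * swap y z ∈ H16 := by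
    intro x y z hxy hyz hxz
    rcases eq_or_ne x 1 with rfl | hx1
    · rw [lemA hxz hyz]
      exact hpk z y (Ne.symm hxz) (Ne.symm hxy) (Ne.symm hyz)
    rcases eq_or_ne y 1 with rfl | hy1
    · rw [swap_comm x 1]
      exact hpk x z hx1 (Ne.symm hyz) hxz
    rcases eq_or_ne z 1 with rfl | hz1
    · rw [lemA hx1 hy1, swap_comm x 1, lemA (Ne.symm hy1) hxy]
      exact hpk y x hy1 hx1 (Ne.symm hxy)
    have e1 : swap 1 x * swap 1 y * swap 1 x = swap x y := lemB (Ne.symm hx1) (Ne.symm hy1) hxy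
    have e2 : swap 1 y * swap 1 z * swap 1 y = swap y z := lemB (Ne.symm hy1) (Ne.symm hz1) hyz
    have m1 : swap 1 x * swap 1 y ∈ H16 := hpk x y hx1 hy1 hxy
    have m2 : swap 1 z * swap 1 y ∈ H16 := hpk z y hz1 hy1 (Ne.symm hyz)
    rw [← e1, ← e2]
    have e3 : (swap 1 x * swap 1 y * swap 1 x) * (swap 1 y * swap 1 z * swap 1 y)
        = (swap 1 x * swap 1 y) * ((swap 1 x * swap 1 y) * (swap 1 z * swap 1 y)) := by
      simp only [mul_assoc]
    rw [e3]
    exact mul_mem m1 (mul_mem m1 m2)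
  obtain ⟨x, y, z, hxy, hxz, hyz, hsupp⟩ := Finset.card_eq_three.mp (card_support_eq_three_iff.mpr hσ)
  have hmem3 : ∀ a : Fin 16, σ a ≠ a → σ a = x ∨ σ a = y ∨ σ a = z := by
    intro a ha
    have h' : σ a ∈ σ.support := Perm.apply_mem_support.mpr (Perm.mem_support.mpr ha)
    rw [hsupp] at h'
    simpa using h'
  have hx' : σ x ≠ x := Perm.mem_support.mp (by rw [hsupp]; simp)
  have hy' : σ y ≠ y := Perm.mem_support.mp (by rw [hsupp]; simp)
  have hz' : σ z ≠ z := Perm.mem_support.mp (by rw [hsupp]; simp)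
  rcases hmem3 x hx' with h1 | h1 | h1
  · exact absurd h1 hx'
  · have h2 : σ y = z := by
      rcases hmem3 y hy' with h2 | h2 | h2
      · exfalso
        rcases hmem3 z hz' with h3 | h3 | h3
        · exact hyz (σ.injective (h2.trans h3.symm))
        · exact hxz (σ.injective (h1.trans h3.symm))
        · exact hz' h3
      · exact absurd h2 hy'
      · exact h2
    have h3 : σ z = x := by
      rcases hmem3 z hz' with h3 | h3 | h3
      · exact h3
      · exact absurd (σ.injective (h1.trans h3.symm)) hxz
      · exact absurd h3 hz'
    rw [eq_swap_swap hxy hxz hyz hsupp h1 h2 h3]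
    exact key x y z hxy hyz hxz
  · have h2 : σ z = y := by
      rcases hmem3 z hz' with h3 | h3 | h3
      · exfalso
        rcases hmem3 y hy' with h4 | h4 | h4
        · exact hyz (σ.injective (h4.trans h3.symm))
        · exact hy' h4
        · exact absurd (σ.injective (h1.trans h4.symm)) hxy
      · exact h3
      · exact absurd h3 hz'
    have h3 : σ y = x := by
      rcases hmem3 y hy' with h4 | h4 | h4
      · exact h4
      · exact absurd h4 hy'
      · exact absurd (σ.injective (h1.trans h4.symm)) hxy
    have hsupp2 : σ.support = {x, z, y} := by
      rw [hsupp, Finset.pair_comm y z]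
    rw [eq_swap_swap hxz hxy (Ne.symm hyz) hsupp2 h1 h2 h3]
    exact key x z y hxz (Ne.symm hyz) hxy

theorem stmt12 :
    let s : Equiv.Perm (Fin 16) := c[1,2,3,4,5,6,7,8,9] * c[10,11,12]
    let t : Equiv.Perm (Fin 16) := c[1,10] * c[2,12] * c[3,13] * c[4,14] * c[5,15] * c[6,16]
    orderOf s = 9 ∧ orderOf (s * t) = 14 ∧ Subgroup.closure {s, t} = alternatingGroup (Fin 16) := by
  intro s t
  refine ⟨?_, ?_, ?_⟩
  · show orderOf S16 = 9
    have : Fact (Nat.Prime 3) := ⟨by norm_num⟩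
    have h := orderOf_eq_prime_pow (x := S16) (p := 3) (n := 1) (by decide) (by decide)
    rw [h]
    norm_num
  · show orderOf (S16 * T16) = 14
    have f2 : (S16 * T16) ^ 2 = F2 := by rw [pow_two]; decide
    have f3 : (S16 * T16) ^ 3 = F3 := by rw [pow_succ, f2]; decide
    have f6 : (S16 * T16) ^ 6 = F6 := by rw [show (6:ℕ) = 3*2 from rfl, pow_mul, f3, pow_two]; decide
    have f7 : (S16 * T16) ^ 7 = F7 := by rw [pow_succ, f6]; decide
    have f14 : (S16 * T16) ^ 14 = 1 := by
      rw [show (14:ℕ) = 7*2 from rfl, pow_mul, f7, pow_two]; decide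
    refine orderOf_eq_of_pow_and_pow_div_prime (by norm_num) f14 ?_
    intro p hp hdvd
    have h2le : 2 ≤ p := hp.two_le
    have hle : p ≤ 14 := Nat.le_of_dvd (by norm_num) hdvd
    have hor : p = 2 ∨ p = 7 := by interval_cases p <;> revert hdvd hp <;> decide
    rcases hor with rfl | rfl
    · rw [show (14/2 : ℕ) = 7 from rfl, f7]; decide
    · rw [show (14/7 : ℕ) = 2 from rfl, f2]; decide
  · show Subgroup.closure {S16, T16} = alternatingGroup (Fin 16)
    apply le_antisymm
    · rw [Subgroup.closure_le]
      intro σ hσ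
      rcases hσ with rfl | rfl
      · exact Equiv.Perm.mem_alternatingGroup.mpr (by decide)
      · exact Equiv.Perm.mem_alternatingGroup.mpr (by decide)
    · rw [← Equiv.Perm.closure_three_cycles_eq_alternating, Subgroup.closure_le]
      intro σ hσ
      exact threeCycle_mem hσ
end

section
/- Let s = (1 2 3 4 5 6 7 8 9)(10 11 12)(13 17 18) and t = (1 10)(2 12)(3 13)(4 14)(5 15)(6 16) be permutations of {1,...,18}. Then s has order 9, s·t has order 16, and ⟨s,t⟩ = A₁₈. -/
set_option maxRecDepth 8000
open Equiv

private def pS : Perm (Fin 18) := c[1,2,3,4,5,6,7,8,9] * c[10,11,12] * c[13,17,18]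
private def pT : Perm (Fin 18) := c[1,10] * c[2,12] * c[3,13] * c[4,14] * c[5,15] * c[6,16]
private def HH : Subgroup (Perm (Fin 18)) := Subgroup.closure {pS, pT}

private def U (k : Fin 18) : Perm (Fin 18) := Equiv.swap 0 1 * Equiv.swap 1 k

private def V (a b : Fin 18) : Perm (Fin 18) :=
  if a = 0 then (if b = 1 then 1 else U b)
  else if a = 1 then (if b = 0 then 1 else (U b)⁻¹)
  else if b = 0 then U a
  else if b = 1 then (U a)⁻¹
  else U a * (U b)⁻¹ * U a

private lemma hs : pS ∈ HH := Subgroup.subset_closure (Set.mem_insert _ _)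
private lemma ht : pT ∈ HH := Subgroup.subset_closure (Set.mem_insert_of_mem _ rfl)

private lemma em1 : (c[0,13,17,2,12,10,1,8,6,15,4] * c[3,11,9,7,16,5,14] : Equiv.Perm (Fin 18)) ∈ HH := by
  rw [show (c[0,13,17,2,12,10,1,8,6,15,4] * c[3,11,9,7,16,5,14] : Equiv.Perm (Fin 18)) = pS⁻¹ * pT * pT * pT * pS⁻¹ by decide]
  exact (mul_mem (mul_mem (mul_mem (mul_mem (inv_mem hs) ht) ht) ht) (inv_mem hs))

private lemma em2 : (c[0,13,11,9,7,16,15,14] * c[2,10,8,6,5,4,3,17] : Equiv.Perm (Fin 18)) ∈ HH := by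
  rw [show (c[0,13,11,9,7,16,15,14] * c[2,10,8,6,5,4,3,17] : Equiv.Perm (Fin 18)) = (c[0,13,17,2,12,10,1,8,6,15,4] * c[3,11,9,7,16,5,14] : Equiv.Perm (Fin 18)) * pT * pS * pS⁻¹ * pT * pT by decide]
  exact (mul_mem (mul_mem (mul_mem (mul_mem (mul_mem em1 ht) hs) (inv_mem hs)) ht) ht)

private lemma em3 : (c[0,2,3,4,5,16,15,14] * c[1,17,11,8] * c[9,10,12] : Equiv.Perm (Fin 18)) ∈ HH := by
  rw [show (c[0,2,3,4,5,16,15,14] * c[1,17,11,8] * c[9,10,12] : Equiv.Perm (Fin 18)) = (c[0,13,11,9,7,16,15,14] * c[2,10,8,6,5,4,3,17] : Equiv.Perm (Fin 18)) * pS * pS by decide]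
  exact (mul_mem (mul_mem em2 hs) hs)

private lemma c0mem : (c[9,12,10] : Equiv.Perm (Fin 18)) ∈ HH := by
  rw [show (c[9,12,10] : Equiv.Perm (Fin 18)) = (c[0,2,3,4,5,16,15,14] * c[1,17,11,8] * c[9,10,12] : Equiv.Perm (Fin 18)) ^ 8 by decide]
  exact pow_mem em3 8

private lemma em4 : (c[0,3,17,12,2,1,10,8,16,5,14] * c[4,13,11,9,7,6,15] : Equiv.Perm (Fin 18)) ∈ HH := by
  rw [show (c[0,3,17,12,2,1,10,8,16,5,14] * c[4,13,11,9,7,6,15] : Equiv.Perm (Fin 18)) = pT * pS⁻¹ * pT * pS⁻¹ * pT by decide]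
  exact (mul_mem (mul_mem (mul_mem (mul_mem ht (inv_mem hs)) ht) (inv_mem hs)) ht)

private lemma em5 : (c[0,11,2,4,16,6,10,1] * c[3,5,7,9,12,17] : Equiv.Perm (Fin 18)) ∈ HH := by
  rw [show (c[0,11,2,4,16,6,10,1] * c[3,5,7,9,12,17] : Equiv.Perm (Fin 18)) = (c[0,3,17,12,2,1,10,8,16,5,14] * c[4,13,11,9,7,6,15] : Equiv.Perm (Fin 18)) * pS * pT * pS * pS * pS by decide]
  exact (mul_mem (mul_mem (mul_mem (mul_mem (mul_mem em4 hs) ht) hs) hs) hs)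

private lemma em6 : (c[0,13,3,16,6,9] * c[1,4,7,8,12] * c[2,5,10] * c[11,17] : Equiv.Perm (Fin 18)) ∈ HH := by
  rw [show (c[0,13,3,16,6,9] * c[1,4,7,8,12] * c[2,5,10] * c[11,17] : Equiv.Perm (Fin 18)) = (c[0,11,2,4,16,6,10,1] * c[3,5,7,9,12,17] : Equiv.Perm (Fin 18)) * pS by decide]
  exact (mul_mem em5 hs)

private lemma em7 : (c[0,13,15,6,5,4,3,17,2,10] * c[7,8,12,14,16] * c[9,11] : Equiv.Perm (Fin 18)) ∈ HH := by
  rw [show (c[0,13,15,6,5,4,3,17,2,10] * c[7,8,12,14,16] * c[9,11] : Equiv.Perm (Fin 18)) = pS⁻¹ * pT * pS * pS * pT by decide]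
  exact (mul_mem (mul_mem (mul_mem (mul_mem (inv_mem hs) ht) hs) hs) ht)

private lemma em8 : (c[0,4,9,11,3,14,5,13,15,8,7,6,16,12,17,2,10] : Equiv.Perm (Fin 18)) ∈ HH := by
  rw [show (c[0,4,9,11,3,14,5,13,15,8,7,6,16,12,17,2,10] : Equiv.Perm (Fin 18)) = (c[0,13,15,6,5,4,3,17,2,10] * c[7,8,12,14,16] * c[9,11] : Equiv.Perm (Fin 18)) * pS * pS * pT * pS⁻¹ * pS⁻¹ by decide]
  exact (mul_mem (mul_mem (mul_mem (mul_mem (mul_mem em7 hs) hs) ht) (inv_mem hs)) (inv_mem hs))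

private lemma em9 : (c[0,14,9] * c[1,17,4,8,11,10,3,5,12] * c[2,15,13] : Equiv.Perm (Fin 18)) ∈ HH := by
  rw [show (c[0,14,9] * c[1,17,4,8,11,10,3,5,12] * c[2,15,13] : Equiv.Perm (Fin 18)) = (c[0,4,9,11,3,14,5,13,15,8,7,6,16,12,17,2,10] : Equiv.Perm (Fin 18)) * pT * pS by decide]
  exact (mul_mem (mul_mem em8 ht) hs)

private lemma em10 : (c[0,14,15,16,6,7,8,12,11] * c[1,9,10] * c[2,13,17] : Equiv.Perm (Fin 18)) ∈ HH := by
  rw [show (c[0,14,15,16,6,7,8,12,11] * c[1,9,10] * c[2,13,17] : Equiv.Perm (Fin 18)) = pS⁻¹ * pT * pS * pT * pS by decide]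
  exact (mul_mem (mul_mem (mul_mem (mul_mem (inv_mem hs) ht) hs) ht) hs)

private lemma em11 : (c[0,17,5,10,4,6,9] * c[1,14,7,13,2,15,8,11,3,16,12] : Equiv.Perm (Fin 18)) ∈ HH := by
  rw [show (c[0,17,5,10,4,6,9] * c[1,14,7,13,2,15,8,11,3,16,12] : Equiv.Perm (Fin 18)) = (c[0,14,15,16,6,7,8,12,11] * c[1,9,10] * c[2,13,17] : Equiv.Perm (Fin 18)) * pS * pS * pT * pS * pS by decide]
  exact (mul_mem (mul_mem (mul_mem (mul_mem (mul_mem em10 hs) hs) ht) hs) hs)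

private lemma em12 : (c[0,14,5,16,8,10,1,2,12,17,3] * c[4,15,6,7,9,11,13] : Equiv.Perm (Fin 18)) ∈ HH := by
  rw [show (c[0,14,5,16,8,10,1,2,12,17,3] * c[4,15,6,7,9,11,13] : Equiv.Perm (Fin 18)) = pT * pS * pT * pS * pT by decide]
  exact (mul_mem (mul_mem (mul_mem (mul_mem ht hs) ht) hs) ht)

private lemma em13 : (c[0,4,8,17,16,10,15,9,13,3,6,2,5,11] * c[1,14,7,12] : Equiv.Perm (Fin 18)) ∈ HH := by
  rw [show (c[0,4,8,17,16,10,15,9,13,3,6,2,5,11] * c[1,14,7,12] : Equiv.Perm (Fin 18)) = (c[0,14,5,16,8,10,1,2,12,17,3] * c[4,15,6,7,9,11,13] : Equiv.Perm (Fin 18)) * pS * pS * pT * pS * pS by decide]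
  exact (mul_mem (mul_mem (mul_mem (mul_mem (mul_mem em12 hs) hs) ht) hs) hs)

private lemma em14 : (c[0,7,13,4,11,3,8,15,10,5,2,16,12,1,14,9] * c[6,17] : Equiv.Perm (Fin 18)) ∈ HH := by
  rw [show (c[0,7,13,4,11,3,8,15,10,5,2,16,12,1,14,9] * c[6,17] : Equiv.Perm (Fin 18)) = (c[0,4,8,17,16,10,15,9,13,3,6,2,5,11] * c[1,14,7,12] : Equiv.Perm (Fin 18)) * pT * pS * pT * pS by decide]
  exact (mul_mem (mul_mem (mul_mem (mul_mem em13 ht) hs) ht) hs)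

private lemma em15 : (c[0,5] * c[3,12] * c[4,11] * c[6,14] * c[7,15] * c[8,16] : Equiv.Perm (Fin 18)) ∈ HH := by
  rw [show (c[0,5] * c[3,12] * c[4,11] * c[6,14] * c[7,15] * c[8,16] : Equiv.Perm (Fin 18)) = pS * pS * pT * pS⁻¹ * pS⁻¹ by decide]
  exact (mul_mem (mul_mem (mul_mem (mul_mem hs hs) ht) (inv_mem hs)) (inv_mem hs))

private lemma em16 : (c[0,12,1,3,4,5,11,13,17,7,14,8,9,10,6] : Equiv.Perm (Fin 18)) ∈ HH := by
  rw [show (c[0,12,1,3,4,5,11,13,17,7,14,8,9,10,6] : Equiv.Perm (Fin 18)) = (c[0,5] * c[3,12] * c[4,11] * c[6,14] * c[7,15] * c[8,16] : Equiv.Perm (Fin 18)) * pT * pS * pS * pT * pS⁻¹ by decide]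
  exact (mul_mem (mul_mem (mul_mem (mul_mem (mul_mem em15 ht) hs) hs) ht) (inv_mem hs))

private lemma em17 : (c[0,12,1,14,8,11,13,17,7,5,2,9] * c[3,10,6,4] : Equiv.Perm (Fin 18)) ∈ HH := by
  rw [show (c[0,12,1,14,8,11,13,17,7,5,2,9] * c[3,10,6,4] : Equiv.Perm (Fin 18)) = (c[0,12,1,3,4,5,11,13,17,7,14,8,9,10,6] : Equiv.Perm (Fin 18)) * pS⁻¹ * pS⁻¹ * pS⁻¹ by decide]
  exact (mul_mem (mul_mem (mul_mem em16 (inv_mem hs)) (inv_mem hs)) (inv_mem hs))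

private lemma em18 : (c[0,4,5,6,7,15,17,13,11,3] * c[1,12] * c[8,16,14,10,9] : Equiv.Perm (Fin 18)) ∈ HH := by
  rw [show (c[0,4,5,6,7,15,17,13,11,3] * c[1,12] * c[8,16,14,10,9] : Equiv.Perm (Fin 18)) = pS * pT * pS⁻¹ * pS⁻¹ * pT by decide]
  exact (mul_mem (mul_mem (mul_mem (mul_mem hs ht) (inv_mem hs)) (inv_mem hs)) ht)

private lemma em19 : (c[0,11,1,3,13,15,8] * c[2,9,5,17,4,10,6,14,16,12,7] : Equiv.Perm (Fin 18)) ∈ HH := by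
  rw [show (c[0,11,1,3,13,15,8] * c[2,9,5,17,4,10,6,14,16,12,7] : Equiv.Perm (Fin 18)) = (c[0,4,5,6,7,15,17,13,11,3] * c[1,12] * c[8,16,14,10,9] : Equiv.Perm (Fin 18)) * pS * pS * pS * pS * pT by decide]
  exact (mul_mem (mul_mem (mul_mem (mul_mem (mul_mem em18 hs) hs) hs) hs) ht)

private lemma em20 : (c[0,4,13,11,6,17,15,8,2,3,9] * c[1,5,10,7,14,16,12] : Equiv.Perm (Fin 18)) ∈ HH := by
  rw [show (c[0,4,13,11,6,17,15,8,2,3,9] * c[1,5,10,7,14,16,12] : Equiv.Perm (Fin 18)) = (c[0,11,1,3,13,15,8] * c[2,9,5,17,4,10,6,14,16,12,7] : Equiv.Perm (Fin 18)) * pS⁻¹ by decide]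
  exact (mul_mem em19 (inv_mem hs))

private lemma em21 : (c[0,17,14,15,16,6,4,13,2,10] * c[1,12] * c[3,9,8,7,5] : Equiv.Perm (Fin 18)) ∈ HH := by
  rw [show (c[0,17,14,15,16,6,4,13,2,10] * c[1,12] * c[3,9,8,7,5] : Equiv.Perm (Fin 18)) = pS⁻¹ * pT * pS * pT * pS⁻¹ by decide]
  exact (mul_mem (mul_mem (mul_mem (mul_mem (inv_mem hs) ht) hs) ht) (inv_mem hs))

private lemma em22 : (c[0,17,12,1,14,10,8,11,7,5,3,16,13,2,15,9] * c[4,6] : Equiv.Perm (Fin 18)) ∈ HH := by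
  rw [show (c[0,17,12,1,14,10,8,11,7,5,3,16,13,2,15,9] * c[4,6] : Equiv.Perm (Fin 18)) = (c[0,17,14,15,16,6,4,13,2,10] * c[1,12] * c[3,9,8,7,5] : Equiv.Perm (Fin 18)) * pS⁻¹ * pS⁻¹ * pT * pS * pS by decide]
  exact (mul_mem (mul_mem (mul_mem (mul_mem (mul_mem em21 (inv_mem hs)) (inv_mem hs)) ht) hs) hs)

private lemma em23 : (c[0,17,13,2,15,4,6,8,11,10,9] * c[1,14,3,16,5,7,12] : Equiv.Perm (Fin 18)) ∈ HH := by
  rw [show (c[0,17,13,2,15,4,6,8,11,10,9] * c[1,14,3,16,5,7,12] : Equiv.Perm (Fin 18)) = pS⁻¹ * pT * pS * pS * pS by decide]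
  exact (mul_mem (mul_mem (mul_mem (mul_mem (inv_mem hs) ht) hs) hs) hs)

private lemma em24 : (c[0,3,2,16,7] * c[1,15,6,11,10] * c[8,14,13,12,9] : Equiv.Perm (Fin 18)) ∈ HH := by
  rw [show (c[0,3,2,16,7] * c[1,15,6,11,10] * c[8,14,13,12,9] : Equiv.Perm (Fin 18)) = (c[0,5] * c[3,12] * c[4,11] * c[6,14] * c[7,15] * c[8,16] : Equiv.Perm (Fin 18)) * pT * pS⁻¹ * pT * pS⁻¹ * pS⁻¹ by decide]
  exact (mul_mem (mul_mem (mul_mem (mul_mem (mul_mem em15 ht) (inv_mem hs)) ht) (inv_mem hs)) (inv_mem hs))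

private lemma em25 : (c[0,12,1,14,13,17,3,15,6,4,16,7,5,2,8,11,9] : Equiv.Perm (Fin 18)) ∈ HH := by
  rw [show (c[0,12,1,14,13,17,3,15,6,4,16,7,5,2,8,11,9] : Equiv.Perm (Fin 18)) = (c[0,3,2,16,7] * c[1,15,6,11,10] * c[8,14,13,12,9] : Equiv.Perm (Fin 18)) * pS⁻¹ * pS⁻¹ by decide]
  exact (mul_mem (mul_mem em24 (inv_mem hs)) (inv_mem hs))

private lemma em26 : (c[0,13,4] * c[1,11,10,17,14,15,16,8,9] * c[2,12,3] : Equiv.Perm (Fin 18)) ∈ HH := by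
  rw [show (c[0,13,4] * c[1,11,10,17,14,15,16,8,9] * c[2,12,3] : Equiv.Perm (Fin 18)) = pS * pT * pS * pT * pS⁻¹ by decide]
  exact (mul_mem (mul_mem (mul_mem (mul_mem hs ht) hs) ht) (inv_mem hs))

private lemma em27 : (c[0,2] * c[1,13,14,4,6,7,9,10,17,3,5,8,12,11] : Equiv.Perm (Fin 18)) ∈ HH := by
  rw [show (c[0,2] * c[1,13,14,4,6,7,9,10,17,3,5,8,12,11] : Equiv.Perm (Fin 18)) = (c[0,13,4] * c[1,11,10,17,14,15,16,8,9] * c[2,12,3] : Equiv.Perm (Fin 18)) * pT * pS⁻¹ * pT * pS * pS by decide]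
  exact (mul_mem (mul_mem (mul_mem (mul_mem (mul_mem em26 ht) (inv_mem hs)) ht) hs) hs)

private lemma em28 : (c[0,3,8,13,2,6,12,1,5,9] * c[4,7,10,11,17,14] : Equiv.Perm (Fin 18)) ∈ HH := by
  rw [show (c[0,3,8,13,2,6,12,1,5,9] * c[4,7,10,11,17,14] : Equiv.Perm (Fin 18)) = (c[0,2] * c[1,13,14,4,6,7,9,10,17,3,5,8,12,11] : Equiv.Perm (Fin 18)) * pS * pS by decide]
  exact (mul_mem (mul_mem em27 hs) hs)

private lemma em29 : (c[1,13] * c[4,15] * c[5,16] * c[6,7] * c[11,12] * c[14,17] : Equiv.Perm (Fin 18)) ∈ HH := by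
  rw [show (c[1,13] * c[4,15] * c[5,16] * c[6,7] * c[11,12] * c[14,17] : Equiv.Perm (Fin 18)) = pT * pS * pT * pS⁻¹ * pT by decide]
  exact (mul_mem (mul_mem (mul_mem (mul_mem ht hs) ht) (inv_mem hs)) ht)

private lemma em30 : (c[0,17,2,1,9,10,13,14,4,15,5,16,7,8,11] : Equiv.Perm (Fin 18)) ∈ HH := by
  rw [show (c[0,17,2,1,9,10,13,14,4,15,5,16,7,8,11] : Equiv.Perm (Fin 18)) = (c[1,13] * c[4,15] * c[5,16] * c[6,7] * c[11,12] * c[14,17] : Equiv.Perm (Fin 18)) * pS⁻¹ * pT * pS * pT * pS by decide]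
  exact (mul_mem (mul_mem (mul_mem (mul_mem (mul_mem em29 (inv_mem hs)) ht) hs) ht) hs)

private lemma em31 : (c[0,15,6,11,3,4,5,7,10,12,1,13,17,14,16,8,9] : Equiv.Perm (Fin 18)) ∈ HH := by
  rw [show (c[0,15,6,11,3,4,5,7,10,12,1,13,17,14,16,8,9] : Equiv.Perm (Fin 18)) = (c[0,17,2,1,9,10,13,14,4,15,5,16,7,8,11] : Equiv.Perm (Fin 18)) * pS * pT * pS by decide]
  exact (mul_mem (mul_mem (mul_mem em30 hs) ht) hs)

private lemma em32 : (c[7,10,14] * c[8,12,15] * c[9,13,16] : Equiv.Perm (Fin 18)) ∈ HH := by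
  rw [show (c[7,10,14] * c[8,12,15] * c[9,13,16] : Equiv.Perm (Fin 18)) = pT * pS * pS * pS * pT by decide]
  exact (mul_mem (mul_mem (mul_mem (mul_mem ht hs) hs) hs) ht)

private lemma em33 : (c[0,17,16,5,10,13,2,8,11,14,3,9] * c[1,7,15,4,6,12] : Equiv.Perm (Fin 18)) ∈ HH := by
  rw [show (c[0,17,16,5,10,13,2,8,11,14,3,9] * c[1,7,15,4,6,12] : Equiv.Perm (Fin 18)) = (c[7,10,14] * c[8,12,15] * c[9,13,16] : Equiv.Perm (Fin 18)) * pS⁻¹ * pT * pS * pS * pS by decide]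
  exact (mul_mem (mul_mem (mul_mem (mul_mem (mul_mem em32 (inv_mem hs)) ht) hs) hs) hs)

private lemma em34 : (c[0,15,7,10,1,11,14,16,8,12,13,3,4,5,6,9,2] : Equiv.Perm (Fin 18)) ∈ HH := by
  rw [show (c[0,15,7,10,1,11,14,16,8,12,13,3,4,5,6,9,2] : Equiv.Perm (Fin 18)) = pT * pS * pS * pT * pS by decide]
  exact (mul_mem (mul_mem (mul_mem (mul_mem ht hs) hs) ht) hs)

private lemma em35 : (c[0,4,9,14,3,6,10,1,15,16,7,12,11,2,5,8] * c[13,17] : Equiv.Perm (Fin 18)) ∈ HH := by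
  rw [show (c[0,4,9,14,3,6,10,1,15,16,7,12,11,2,5,8] * c[13,17] : Equiv.Perm (Fin 18)) = (c[0,15,7,10,1,11,14,16,8,12,13,3,4,5,6,9,2] : Equiv.Perm (Fin 18)) * pT * pS⁻¹ * pT * pS * pS by decide]
  exact (mul_mem (mul_mem (mul_mem (mul_mem (mul_mem em34 ht) (inv_mem hs)) ht) hs) hs)

private lemma em36 : (c[0,13,11,15,3,4,9] * c[1,5,8,12] * c[6,10,14,17] : Equiv.Perm (Fin 18)) ∈ HH := by
  rw [show (c[0,13,11,15,3,4,9] * c[1,5,8,12] * c[6,10,14,17] : Equiv.Perm (Fin 18)) = (c[0,4,9,14,3,6,10,1,15,16,7,12,11,2,5,8] * c[13,17] : Equiv.Perm (Fin 18)) * pT * pS⁻¹ * pT by decide]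
  exact (mul_mem (mul_mem (mul_mem em35 ht) (inv_mem hs)) ht)

private lemma em37 : (c[0,12,1,14,2,9] * c[3,10,15,4] * c[5,13,17,16] * c[8,11] : Equiv.Perm (Fin 18)) ∈ HH := by
  rw [show (c[0,12,1,14,2,9] * c[3,10,15,4] * c[5,13,17,16] * c[8,11] : Equiv.Perm (Fin 18)) = (c[0,3,2,16,7] * c[1,15,6,11,10] * c[8,14,13,12,9] : Equiv.Perm (Fin 18)) * pS⁻¹ * pT * pS⁻¹ by decide]
  exact (mul_mem (mul_mem (mul_mem em24 (inv_mem hs)) ht) (inv_mem hs))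

private lemma em38 : (c[0,17,6,4,13,2,10,16,12,1,14,7,5,3,9] * c[8,11,15] : Equiv.Perm (Fin 18)) ∈ HH := by
  rw [show (c[0,17,6,4,13,2,10,16,12,1,14,7,5,3,9] * c[8,11,15] : Equiv.Perm (Fin 18)) = (c[0,17,13,2,15,4,6,8,11,10,9] * c[1,14,3,16,5,7,12] : Equiv.Perm (Fin 18)) * pS * pT * pS⁻¹ by decide]
  exact (mul_mem (mul_mem (mul_mem em23 hs) ht) (inv_mem hs))

private lemma em39 : (c[1,17] * c[2,14] * c[3,15] * c[4,16] * c[8,11] * c[9,10] : Equiv.Perm (Fin 18)) ∈ HH := by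
  rw [show (c[1,17] * c[2,14] * c[3,15] * c[4,16] * c[8,11] * c[9,10] : Equiv.Perm (Fin 18)) = pS⁻¹ * pS⁻¹ * pT * pS * pS by decide]
  exact (mul_mem (mul_mem (mul_mem (mul_mem (inv_mem hs) (inv_mem hs)) ht) hs) hs)

private lemma em40 : (c[0,2,12,1,14,5,4,3] * c[6,7,10,17,15] * c[8,9] * c[11,13,16] : Equiv.Perm (Fin 18)) ∈ HH := by
  rw [show (c[0,2,12,1,14,5,4,3] * c[6,7,10,17,15] * c[8,9] * c[11,13,16] : Equiv.Perm (Fin 18)) = (c[1,17] * c[2,14] * c[3,15] * c[4,16] * c[8,11] * c[9,10] : Equiv.Perm (Fin 18)) * pT * pS * pT * pS * pT by decide]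
  exact (mul_mem (mul_mem (mul_mem (mul_mem (mul_mem em39 ht) hs) ht) hs) ht)

private lemma em41 : (c[0,2,4,10,17,15,6,8,12,1,3,7,14,5,9] * c[11,13,16] : Equiv.Perm (Fin 18)) ∈ HH := by
  rw [show (c[0,2,4,10,17,15,6,8,12,1,3,7,14,5,9] * c[11,13,16] : Equiv.Perm (Fin 18)) = (c[0,2,12,1,14,5,4,3] * c[6,7,10,17,15] * c[8,9] * c[11,13,16] : Equiv.Perm (Fin 18)) * pS * pS * pS by decide]
  exact (mul_mem (mul_mem (mul_mem em40 hs) hs) hs)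

private lemma hu : ∀ k : Fin 18, k ≠ 0 → k ≠ 1 → U k ∈ HH := by
  intro k h0 h1
  fin_cases k
  · exact absurd rfl h0
  · exact absurd rfl h1
  · show U 2 ∈ HH
    rw [show U 2 = (c[0,13,3,16,6,9] * c[1,4,7,8,12] * c[2,5,10] * c[11,17] : Equiv.Perm (Fin 18)) * (c[9,12,10] : Equiv.Perm (Fin 18)) * (c[0,13,3,16,6,9] * c[1,4,7,8,12] * c[2,5,10] * c[11,17] : Equiv.Perm (Fin 18))⁻¹ by decide]
    exact mul_mem (mul_mem em6 c0mem) (inv_mem em6)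
  · show U 3 ∈ HH
    rw [show U 3 = (c[0,14,9] * c[1,17,4,8,11,10,3,5,12] * c[2,15,13] : Equiv.Perm (Fin 18)) * (c[9,12,10] : Equiv.Perm (Fin 18)) * (c[0,14,9] * c[1,17,4,8,11,10,3,5,12] * c[2,15,13] : Equiv.Perm (Fin 18))⁻¹ by decide]
    exact mul_mem (mul_mem em9 c0mem) (inv_mem em9)
  · show U 4 ∈ HH
    rw [show U 4 = (c[0,17,5,10,4,6,9] * c[1,14,7,13,2,15,8,11,3,16,12] : Equiv.Perm (Fin 18)) * (c[9,12,10] : Equiv.Perm (Fin 18)) * (c[0,17,5,10,4,6,9] * c[1,14,7,13,2,15,8,11,3,16,12] : Equiv.Perm (Fin 18))⁻¹ by decide]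
    exact mul_mem (mul_mem em11 c0mem) (inv_mem em11)
  · show U 5 ∈ HH
    rw [show U 5 = (c[0,7,13,4,11,3,8,15,10,5,2,16,12,1,14,9] * c[6,17] : Equiv.Perm (Fin 18)) * (c[9,12,10] : Equiv.Perm (Fin 18)) * (c[0,7,13,4,11,3,8,15,10,5,2,16,12,1,14,9] * c[6,17] : Equiv.Perm (Fin 18))⁻¹ by decide]
    exact mul_mem (mul_mem em14 c0mem) (inv_mem em14)
  · show U 6 ∈ HH
    rw [show U 6 = (c[0,12,1,14,8,11,13,17,7,5,2,9] * c[3,10,6,4] : Equiv.Perm (Fin 18)) * (c[9,12,10] : Equiv.Perm (Fin 18)) * (c[0,12,1,14,8,11,13,17,7,5,2,9] * c[3,10,6,4] : Equiv.Perm (Fin 18))⁻¹ by decide]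
    exact mul_mem (mul_mem em17 c0mem) (inv_mem em17)
  · show U 7 ∈ HH
    rw [show U 7 = (c[0,4,13,11,6,17,15,8,2,3,9] * c[1,5,10,7,14,16,12] : Equiv.Perm (Fin 18)) * (c[9,12,10] : Equiv.Perm (Fin 18)) * (c[0,4,13,11,6,17,15,8,2,3,9] * c[1,5,10,7,14,16,12] : Equiv.Perm (Fin 18))⁻¹ by decide]
    exact mul_mem (mul_mem em20 c0mem) (inv_mem em20)
  · show U 8 ∈ HH
    rw [show U 8 = (c[0,17,12,1,14,10,8,11,7,5,3,16,13,2,15,9] * c[4,6] : Equiv.Perm (Fin 18)) * (c[9,12,10] : Equiv.Perm (Fin 18)) * (c[0,17,12,1,14,10,8,11,7,5,3,16,13,2,15,9] * c[4,6] : Equiv.Perm (Fin 18))⁻¹ by decide]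
    exact mul_mem (mul_mem em22 c0mem) (inv_mem em22)
  · show U 9 ∈ HH
    rw [show U 9 = (c[0,17,13,2,15,4,6,8,11,10,9] * c[1,14,3,16,5,7,12] : Equiv.Perm (Fin 18)) * (c[9,12,10] : Equiv.Perm (Fin 18)) * (c[0,17,13,2,15,4,6,8,11,10,9] * c[1,14,3,16,5,7,12] : Equiv.Perm (Fin 18))⁻¹ by decide]
    exact mul_mem (mul_mem em23 c0mem) (inv_mem em23)
  · show U 10 ∈ HH
    rw [show U 10 = (c[0,12,1,14,13,17,3,15,6,4,16,7,5,2,8,11,9] : Equiv.Perm (Fin 18)) * (c[9,12,10] : Equiv.Perm (Fin 18)) * (c[0,12,1,14,13,17,3,15,6,4,16,7,5,2,8,11,9] : Equiv.Perm (Fin 18))⁻¹ by decide]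
    exact mul_mem (mul_mem em25 c0mem) (inv_mem em25)
  · show U 11 ∈ HH
    rw [show U 11 = (c[0,3,8,13,2,6,12,1,5,9] * c[4,7,10,11,17,14] : Equiv.Perm (Fin 18)) * (c[9,12,10] : Equiv.Perm (Fin 18)) * (c[0,3,8,13,2,6,12,1,5,9] * c[4,7,10,11,17,14] : Equiv.Perm (Fin 18))⁻¹ by decide]
    exact mul_mem (mul_mem em28 c0mem) (inv_mem em28)
  · show U 12 ∈ HH
    rw [show U 12 = (c[0,15,6,11,3,4,5,7,10,12,1,13,17,14,16,8,9] : Equiv.Perm (Fin 18)) * (c[9,12,10] : Equiv.Perm (Fin 18)) * (c[0,15,6,11,3,4,5,7,10,12,1,13,17,14,16,8,9] : Equiv.Perm (Fin 18))⁻¹ by decide]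
    exact mul_mem (mul_mem em31 c0mem) (inv_mem em31)
  · show U 13 ∈ HH
    rw [show U 13 = (c[0,17,16,5,10,13,2,8,11,14,3,9] * c[1,7,15,4,6,12] : Equiv.Perm (Fin 18)) * (c[9,12,10] : Equiv.Perm (Fin 18)) * (c[0,17,16,5,10,13,2,8,11,14,3,9] * c[1,7,15,4,6,12] : Equiv.Perm (Fin 18))⁻¹ by decide]
    exact mul_mem (mul_mem em33 c0mem) (inv_mem em33)
  · show U 14 ∈ HH
    rw [show U 14 = (c[0,13,11,15,3,4,9] * c[1,5,8,12] * c[6,10,14,17] : Equiv.Perm (Fin 18)) * (c[9,12,10] : Equiv.Perm (Fin 18)) * (c[0,13,11,15,3,4,9] * c[1,5,8,12] * c[6,10,14,17] : Equiv.Perm (Fin 18))⁻¹ by decide]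
    exact mul_mem (mul_mem em36 c0mem) (inv_mem em36)
  · show U 15 ∈ HH
    rw [show U 15 = (c[0,12,1,14,2,9] * c[3,10,15,4] * c[5,13,17,16] * c[8,11] : Equiv.Perm (Fin 18)) * (c[9,12,10] : Equiv.Perm (Fin 18)) * (c[0,12,1,14,2,9] * c[3,10,15,4] * c[5,13,17,16] * c[8,11] : Equiv.Perm (Fin 18))⁻¹ by decide]
    exact mul_mem (mul_mem em37 c0mem) (inv_mem em37)
  · show U 16 ∈ HH
    rw [show U 16 = (c[0,17,6,4,13,2,10,16,12,1,14,7,5,3,9] * c[8,11,15] : Equiv.Perm (Fin 18)) * (c[9,12,10] : Equiv.Perm (Fin 18)) * (c[0,17,6,4,13,2,10,16,12,1,14,7,5,3,9] * c[8,11,15] : Equiv.Perm (Fin 18))⁻¹ by decide]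
    exact mul_mem (mul_mem em38 c0mem) (inv_mem em38)
  · show U 17 ∈ HH
    rw [show U 17 = (c[0,2,4,10,17,15,6,8,12,1,3,7,14,5,9] * c[11,13,16] : Equiv.Perm (Fin 18)) * (c[9,12,10] : Equiv.Perm (Fin 18)) * (c[0,2,4,10,17,15,6,8,12,1,3,7,14,5,9] * c[11,13,16] : Equiv.Perm (Fin 18))⁻¹ by decide]
    exact mul_mem (mul_mem em41 c0mem) (inv_mem em41)

private lemma hVeq : ∀ a b : Fin 18, a ≠ b → Equiv.swap a b * Equiv.swap 0 1 = V a b := by decide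

private lemma hVmem (a b : Fin 18) (hab : a ≠ b) : V a b ∈ HH := by
  unfold V
  split_ifs with h1 h2 h3 h4 h5 h6
  · exact one_mem _
  · exact hu b (fun h => hab (h1.trans h.symm)) h2
  · exact one_mem _
  · exact inv_mem (hu b h4 (fun h => hab (h3.trans h.symm)))
  · exact hu a h1 h3
  · exact inv_mem (hu a h1 h3)
  · exact mul_mem (mul_mem (hu a h1 h3) (inv_mem (hu b h5 h6))) (hu a h1 h3)

private lemma pair_mem (x y : Perm (Fin 18)) (hx : x.IsSwap) (hy : y.IsSwap) : x * y ∈ HH := by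
  obtain ⟨a, b, hab, rfl⟩ := hx
  obtain ⟨c, d, hcd, rfl⟩ := hy
  have key : Equiv.swap a b * Equiv.swap c d
      = (Equiv.swap a b * Equiv.swap 0 1) * (Equiv.swap c d * Equiv.swap 0 1)⁻¹ := by
    simp [mul_inv_rev, mul_assoc]
  rw [key, hVeq a b hab, hVeq c d hcd]
  exact mul_mem (hVmem a b hab) (inv_mem (hVmem c d hcd))

private lemma listlem : ∀ l : List (Perm (Fin 18)), (∀ g ∈ l, g.IsSwap) → Even l.length → l.prod ∈ HH
  | [] => fun _ _ => by simpa using one_mem HH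
  | [x] => fun _ h => by simp at h
  | x :: y :: l => fun hsw he => by
      rw [List.prod_cons, List.prod_cons, ← mul_assoc]
      refine mul_mem (pair_mem x y (hsw x (by simp)) (hsw y (by simp)))
        (listlem l (fun g hg => hsw g (by simp [hg])) ?_)
      simpa [Nat.even_add_one] using he

private lemma a_le : alternatingGroup (Fin 18) ≤ HH := by
  intro f hf
  obtain ⟨l, hl, hsw⟩ := (Equiv.Perm.truncSwapFactors f).out
  have he : Even l.length :=
    (Equiv.Perm.prod_list_swap_mem_alternatingGroup_iff_even_length hsw).mp (by rwa [hl])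
  exact hl ▸ listlem l hsw he

private lemma le_a : HH ≤ alternatingGroup (Fin 18) := by
  rw [HH, Subgroup.closure_le]
  rintro x (rfl | rfl)
  · rw [SetLike.mem_coe, Equiv.Perm.mem_alternatingGroup]; decide
  · rw [SetLike.mem_coe, Equiv.Perm.mem_alternatingGroup]; decide

theorem stmt13 :
    let s : Equiv.Perm (Fin 18) := c[1,2,3,4,5,6,7,8,9] * c[10,11,12] * c[13,17,18]
    let t : Equiv.Perm (Fin 18) := c[1,10] * c[2,12] * c[3,13] * c[4,14] * c[5,15] * c[6,16]
    orderOf s = 9 ∧ orderOf (s * t) = 16 ∧ Subgroup.closure {s, t} = alternatingGroup (Fin 18) := by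
  intro s t
  refine ⟨?_, ?_, le_antisymm le_a a_le⟩
  · show orderOf pS = 9
    rw [orderOf_eq_iff (by norm_num)]; decide
  · show orderOf (pS * pT) = 16
    have h2 : (pS * pT) ^ 2 = (c[0,4,5,6,7,9,11,3] * c[1,12,17,13,14,15,16,8] : Equiv.Perm (Fin 18)) := by decide
    have h4 : (c[0,4,5,6,7,9,11,3] * c[1,12,17,13,14,15,16,8] : Equiv.Perm (Fin 18)) ^ 2 = (c[0,5,7,11] * c[1,17,14,16] * c[3,4,6,9] * c[8,12,13,15] : Equiv.Perm (Fin 18)) := by decide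
    have h8 : (c[0,5,7,11] * c[1,17,14,16] * c[3,4,6,9] * c[8,12,13,15] : Equiv.Perm (Fin 18)) ^ 2 = (c[0,7] * c[1,14] * c[3,6] * c[4,9] * c[5,11] * c[8,13] * c[12,15] * c[16,17] : Equiv.Perm (Fin 18)) := by decide
    have h16 : (c[0,7] * c[1,14] * c[3,6] * c[4,9] * c[5,11] * c[8,13] * c[12,15] * c[16,17] : Equiv.Perm (Fin 18)) ^ 2 = 1 := by decide
    have key := orderOf_eq_prime_pow (x := pS * pT) (p := 2) (n := 3) ?_ ?_
    · exact key.trans (by norm_num)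
    · rw [show (2:ℕ) ^ 3 = 2 * 2 * 2 from rfl, pow_mul, pow_mul, h2, h4, h8]
      decide
    · rw [show (2:ℕ) ^ (3+1) = 2 * 2 * 2 * 2 from rfl, pow_mul, pow_mul, pow_mul, h2, h4, h8, h16]
end

section
/- Let s = (1 2 3 4 5 6 7 8 9)(10 11 12)(13 17 18)(14 19 20) and t = (1 10)(2 12)(3 13)(4 14)(5 15)(6 16) be permutations of {1,...,20}. Then s·t has order 18 and ⟨s,t⟩ = A₂₀. -/
set_option maxRecDepth 100000

open Equiv Equiv.Perm Subgroup

private def Sx : Perm (Fin 20) :=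
  ⟨fun x => [14,2,3,4,5,6,7,8,9,1,11,12,10,17,19,15,16,18,13,0].getD x.val 0,
   fun x => [19,9,1,2,3,4,5,6,7,8,12,10,11,18,0,15,16,13,17,14].getD x.val 0, by decide, by decide⟩

private def Tx : Perm (Fin 20) :=
  ⟨fun x => [0,10,12,13,14,15,16,7,8,9,1,11,2,3,4,5,6,17,18,19].getD x.val 0,
   fun x => [0,10,12,13,14,15,16,7,8,9,1,11,2,3,4,5,6,17,18,19].getD x.val 0, by decide, by decide⟩

private def ev : List Bool → Perm (Fin 20)
  | [] => 1
  | b :: l => (if b then Sx else Tx) * ev l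

private def Hx : Subgroup (Perm (Fin 20)) := Subgroup.closure {Sx, Tx}

private lemma ev_mem : ∀ l, ev l ∈ Hx := by
  intro l
  induction l with
  | nil => exact one_mem _
  | cons b l ih =>
    refine mul_mem ?_ ih
    cases b
    · exact subset_closure (Set.mem_insert_of_mem _ rfl)
    · exact subset_closure (Set.mem_insert _ _)

private def wv : Fin 20 → List Bool := fun x =>
  [[true,true,false,true,true,true],
    [],
    [true],
    [true,true],
    [true,true,true],
    [true,true,true,true],
    [true,true,true,true,true],
    [true,true,true,true,true,true],
    [true,true,true,true,true,true,true],
    [true,true,true,true,true,true,true,true],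
    [false],
    [true,false],
    [false,true],
    [false,true,true],
    [false,true,true,true],
    [false,true,true,true,true],
    [false,true,true,true,true,true],
    [true,false,true,true],
    [true,true,false,true,true],
    [true,false,true,true,true]].getD x.val []

private def wf : Fin 20 → List Bool := fun x =>
  [[false,true,true,false,true,true,true,false,true,false],
    [],
    [],
    [false,true,false,true,false,true,false,true],
    [true,true,true,true,false,true,true,false,true,true,true,true,true],
    [false,true,false,true,true,true,true,true,false,true,true,false,true,true,true,true,true],
    [true,true,true,true,true,false,true,true,false,true,true,true,false,true,true,false],
    [false,true,false,true,false,true,true,true,true,true,false,true,false],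
    [true,true,false,true,true,true,true,false,true,false,true,true,false,true,true,true],
    [false,true,true,true,true,true,true,true,true,false,true,false],
    [true,true,true,true,true,true,true,true,false,true,true,false],
    [true,false,true,true,true,true,true,true,true,true],
    [true,true,false,true,true,false,true,false,true,true,true,true,true],
    [false,true,true,false,true,false],
    [false,true,false,true,false,true,false,true,false,true,true,false,true,false],
    [false,true,false,true,false,true,true,false,true,true,true,false,true,false],
    [false,true,true,true,true,true,false,true,false],
    [false,true,false,true],
    [false,true,false,true,false,true,true,false,true,false],
    [false,true,false,true,false,true,false,true,false,true,false,true]].getD x.val []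

private def wc : List Bool := [true,true,true,true,true,true,true,false,true,true,false,true,true,true,true,true,true,true,false,true,true,false,true,true,true,true,true,true,true,false,true,true,false,true,true,true,true,true,true,true,false,true,true,false]

private def wg : Fin 20 → List Bool := fun x =>
  [[true,true,true,true,false,true,true,false,true,false,true,true,true,false,true,true,true],
    [],
    [],
    [true,false,true,true,false,true,true,true,false,true,true,true,false,true,true],
    [true,true,true,true,true,true,false,true,true,false,true,true,true,false,true,false,true,true],
    [false,true,false,true,true,true,false,true,true,false,true,false,true,true,false,true,true,true,false,true,true],
    [true,true,false,true,true,false,true,true,false,true,false,true,true,true,false,true,true,true],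
    [false,true,true,true,false,true,false,true,true,true,true,true,true,true],
    [true,true,true,false,true,false,true,false,true,false,true,true,true,true,false,true,true,true],
    [false,true,true,false,true,true,true,false,true,true,true,true,true,false],
    [false,true,false,true,true,true,true,true,false,true,false,true,true,true,true],
    [true,false,true,false,true,true,true,true,false,true,true,true,true,true,false,true,false,true,true],
    [true,false,true,false,true,false,true,true,true,true,false,true,false,true,false,true,false,true],
    [false,true,true,true,true,true,false,true,true,true,false,true,true,true,true,true,false],
    [true,false,true,true,true,true,true,true,true],
    [true,true,true,true,false,true,false,true,false,true,true,true,true,false,true,true,true],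
    [true,false,true,true,false,true,true,true,true,true],
    [true,false,true,true,true,true,true,false,true,true,true,false,true,true],
    [true,false,true,false,true,true,true,true,false,true,true,true,false,true,true,false,true,false,true,true,false],
    [false,true,false,true,true,true,true,true,true,true,true,false,true,false,true,false,true,false,true]].getD x.val []

private lemma hv : ∀ x : Fin 20, ev (wv x) 1 = x := by decide

private lemma hf : ∀ x : Fin 20, x ≠ 1 → ev (wf x) 1 = 1 ∧ ev (wf x) 2 = x := by decide

private lemma hg : ∀ k : Fin 20, k ≠ 1 → k ≠ 2 →
    swap 1 2 * swap 2 k = ev (wg k) * ev wc * (ev (wg k))⁻¹ := by decide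

private def uu (a b : Fin 20) : Perm (Fin 20) :=
  ev (wv a) * ev (wf ((ev (wv a))⁻¹ b))

private lemma uu_mem (a b : Fin 20) : uu a b ∈ Hx := mul_mem (ev_mem _) (ev_mem _)

private lemma huu {a b : Fin 20} (hab : a ≠ b) : uu a b 1 = a ∧ uu a b 2 = b := by
  have h1 := hv a
  have hne : (ev (wv a))⁻¹ b ≠ 1 := by
    intro h
    apply hab
    have : b = ev (wv a) 1 := by
      conv_lhs => rw [← (show ev (wv a) ((ev (wv a))⁻¹ b) = b from (ev (wv a)).apply_symm_apply b), h]
    rw [this, h1]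
  obtain ⟨hf1, hf2⟩ := hf _ hne
  constructor
  · show (ev (wv a)) (ev (wf ((ev (wv a))⁻¹ b)) 1) = a
    rw [hf1, h1]
  · show (ev (wv a)) (ev (wf ((ev (wv a))⁻¹ b)) 2) = b
    rw [hf2, (show ev (wv a) ((ev (wv a))⁻¹ b) = b from (ev (wv a)).apply_symm_apply b)]

private lemma swap2_mem {a b c : Fin 20} (hab : a ≠ b) (hbc : b ≠ c) (hac : a ≠ c) :
    swap a b * swap b c ∈ Hx := by
  obtain ⟨h1, h2⟩ := huu hab
  set u := uu a b with hu
  set k := u⁻¹ c with hk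
  have hck : u k = c := u.apply_symm_apply c
  have hk1 : k ≠ 1 := by
    intro h; rw [h, h1] at hck; exact hac hck
  have hk2 : k ≠ 2 := by
    intro h; rw [h, h2] at hck; exact hbc hck
  have key : swap a b * swap b c = u * (swap 1 2 * swap 2 k) * u⁻¹ := by
    have e1 : swap a b = u * swap 1 2 * u⁻¹ := by
      rw [← swap_apply_apply, h1, h2]
    have e2 : swap b c = u * swap 2 k * u⁻¹ := by
      rw [← swap_apply_apply, h2, hck]
    rw [e1, e2]
    group
  rw [key]
  have hmid : swap 1 2 * swap 2 k ∈ Hx := by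
    rw [hg k hk1 hk2]
    exact mul_mem (mul_mem (ev_mem _) (ev_mem _)) (inv_mem (ev_mem _))
  exact mul_mem (mul_mem (uu_mem a b) hmid) (inv_mem (uu_mem a b))

private lemma threeCycle_decomp {σ : Perm (Fin 20)} (h : σ.IsThreeCycle) :
    ∃ a b c : Fin 20, a ≠ b ∧ b ≠ c ∧ a ≠ c ∧ σ = swap a b * swap b c := by
  have hcard := h.card_support
  have h3 : σ ^ 3 = 1 := by rw [← h.orderOf]; exact pow_orderOf_eq_one σ
  obtain ⟨a, ha⟩ : σ.support.Nonempty := by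
    rw [← Finset.card_pos, hcard]; norm_num
  have hb : σ a ∈ σ.support := apply_mem_support.mpr ha
  have hc : σ (σ a) ∈ σ.support := apply_mem_support.mpr hb
  have e3 : σ (σ (σ a)) = a := by
    have : (σ ^ 3) a = a := by rw [h3]; rfl
    simpa [pow_succ, Perm.mul_apply] using this
  have hab : a ≠ σ a := (mem_support.mp ha).symm
  have hbc : σ a ≠ σ (σ a) := (mem_support.mp hb).symm
  have hac : a ≠ σ (σ a) := by
    intro heq
    apply mem_support.mp ha
    conv_lhs => rw [heq]
    exact e3
  refine ⟨a, σ a, σ (σ a), hab, hbc, hac, ?_⟩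
  have hsupp : σ.support = {a, σ a, σ (σ a)} := by
    symm
    apply Finset.eq_of_subset_of_card_le
    · intro x hx
      simp only [Finset.mem_insert, Finset.mem_singleton] at hx
      rcases hx with rfl | rfl | rfl
      · exact ha
      · exact hb
      · exact hc
    · rw [hcard]
      have hcard3 : ({a, σ a, σ (σ a)} : Finset (Fin 20)).card = 3 := by
        rw [Finset.card_insert_of_notMem (by simp [hab, hac]),
          Finset.card_insert_of_notMem (by simp [hbc]), Finset.card_singleton]
      rw [hcard3]
  ext x
  by_cases hxa : x = a
  · subst hxa
    rw [Perm.mul_apply, swap_apply_of_ne_of_ne hab (hac),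
      swap_apply_left]
  · by_cases hxb : x = σ a
    · subst hxb
      rw [Perm.mul_apply, swap_apply_left, swap_apply_of_ne_of_ne (Ne.symm hac) (Ne.symm hbc)]
    · by_cases hxc : x = σ (σ a)
      · subst hxc
        rw [Perm.mul_apply, swap_apply_right, swap_apply_right, e3]
      · have hx : x ∉ σ.support := by
          rw [hsupp]
          simp [hxa, hxb, hxc]
        rw [notMem_support.mp hx, Perm.mul_apply,
          swap_apply_of_ne_of_ne hxb hxc, swap_apply_of_ne_of_ne hxa hxb]

private lemma alt_le : alternatingGroup (Fin 20) ≤ Hx := by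
  rw [← closure_three_cycles_eq_alternating, closure_le]
  intro σ hσ
  obtain ⟨a, b, c, hab, hbc, hac, rfl⟩ := threeCycle_decomp hσ
  exact swap2_mem hab hbc hac

private lemma sign_Sx : sign Sx = 1 := by
  have hd : Sx = swap 1 2 * swap 2 3 * swap 3 4 * swap 4 5 * swap 5 6 * swap 6 7 * swap 7 8 *
      swap 8 9 * swap 10 11 * swap 11 12 * swap 13 17 * swap 17 18 * swap 14 19 * swap 19 0 := by
    decide
  rw [hd]
  simp only [map_mul]
  rw [sign_swap (by decide), sign_swap (by decide), sign_swap (by decide), sign_swap (by decide),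
    sign_swap (by decide), sign_swap (by decide), sign_swap (by decide), sign_swap (by decide),
    sign_swap (by decide), sign_swap (by decide), sign_swap (by decide), sign_swap (by decide),
    sign_swap (by decide), sign_swap (by decide)]
  norm_num

private lemma sign_Tx : sign Tx = 1 := by
  have hd : Tx = swap 1 10 * swap 2 12 * swap 3 13 * swap 4 14 * swap 5 15 * swap 6 16 := by
    decide
  rw [hd]
  simp only [map_mul]
  rw [sign_swap (by decide), sign_swap (by decide), sign_swap (by decide), sign_swap (by decide),
    sign_swap (by decide), sign_swap (by decide)]
  norm_num

private lemma le_alt : Hx ≤ alternatingGroup (Fin 20) := by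
  rw [Hx, closure_le]
  intro x hx
  rcases hx with rfl | rfl
  · exact mem_alternatingGroup.mpr sign_Sx
  · exact mem_alternatingGroup.mpr sign_Tx

private lemma clos_eq : Hx = alternatingGroup (Fin 20) := le_antisymm le_alt alt_le

private lemma ord_eq : orderOf (Sx * Tx) = 18 := by
  have h18 : (Sx * Tx) ^ 18 = 1 := by decide
  have h9 : ¬ (Sx * Tx) ^ 9 = 1 := by decide
  have h6 : ¬ (Sx * Tx) ^ 6 = 1 := by decide
  have hd : orderOf (Sx * Tx) ∣ 18 := orderOf_dvd_of_pow_eq_one h18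
  have hd9 : ¬ orderOf (Sx * Tx) ∣ 9 := fun h => h9 (orderOf_dvd_iff_pow_eq_one.mp h)
  have hd6 : ¬ orderOf (Sx * Tx) ∣ 6 := fun h => h6 (orderOf_dvd_iff_pow_eq_one.mp h)
  have hle : orderOf (Sx * Tx) ≤ 18 := Nat.le_of_dvd (by norm_num) hd
  set o := orderOf (Sx * Tx) with ho
  interval_cases o <;> revert hd hd9 hd6 <;> decide

theorem stmt14 :
    let s : Equiv.Perm (Fin 20) := c[1,2,3,4,5,6,7,8,9] * c[10,11,12] * c[13,17,18] * c[14,19,20]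
    let t : Equiv.Perm (Fin 20) := c[1,10] * c[2,12] * c[3,13] * c[4,14] * c[5,15] * c[6,16]
    orderOf (s * t) = 18 ∧ Subgroup.closure {s, t} = alternatingGroup (Fin 20) := by
  intro s t
  have hs : s = Sx := by decide
  have ht : t = Tx := by decide
  rw [hs, ht]
  exact ⟨ord_eq, clos_eq⟩
end

section
/- Let G be the subgroup of S₁₀ generated by s = (1 2 3 4 5)(6 7 8 9 10) and t = (1 6)(2 4). Then there is no automorphism φ of G with φ(s) = s⁻¹ and φ(t) = t. -/
open Equiv

theorem stmt18 :
    let s : Equiv.Perm (Fin 10) := c[1,2,3,4,5] * c[6,7,8,9,10]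
    let t : Equiv.Perm (Fin 10) := c[1,6] * c[2,4]
    ∀ (hs : s ∈ Subgroup.closure ({s, t} : Set (Equiv.Perm (Fin 10))))
      (ht : t ∈ Subgroup.closure ({s, t} : Set (Equiv.Perm (Fin 10)))),
    ¬ ∃ φ : Subgroup.closure ({s, t} : Set (Equiv.Perm (Fin 10))) ≃*
           Subgroup.closure ({s, t} : Set (Equiv.Perm (Fin 10))),
      ((φ ⟨s, hs⟩ : Equiv.Perm (Fin 10)) = s⁻¹) ∧
      ((φ ⟨t, ht⟩ : Equiv.Perm (Fin 10)) = t) := by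
  intro s t hs ht
  rintro ⟨φ, h1, h2⟩
  have hse : s = c[1,2,3,4,5] * c[6,7,8,9,10] := rfl
  have hte : t = c[1,6] * c[2,4] := rfl
  let S : Subgroup.closure ({s, t} : Set (Equiv.Perm (Fin 10))) := ⟨s, hs⟩
  let T : Subgroup.closure ({s, t} : Set (Equiv.Perm (Fin 10))) := ⟨t, ht⟩
  let g := S*T*(S*S)*T*(S*S*S)*T
  have hginner : (g : Equiv.Perm (Fin 10)) = c[1,2,7,8,4,5] * c[3,9,10,6] := by
    have h : (g : Equiv.Perm (Fin 10)) = s*t*(s*s)*t*(s*s*s)*t := rfl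
    rw [h, hse, hte]
    set_option maxRecDepth 100000 in decide
  have hg12 : g ^ 12 = 1 := by
    apply Subtype.ext
    rw [SubmonoidClass.coe_pow, hginner, OneMemClass.coe_one]
    set_option maxRecDepth 100000 in decide
  have hφg : ((φ g : Subgroup.closure ({s, t} : Set (Equiv.Perm (Fin 10)))) :
      Equiv.Perm (Fin 10)) = c[1,5,3,2,8,7,6,10,9] := by
    have h : ((φ g : Subgroup.closure ({s, t} : Set (Equiv.Perm (Fin 10)))) :
        Equiv.Perm (Fin 10)) = s⁻¹*t*(s⁻¹*s⁻¹)*t*(s⁻¹*s⁻¹*s⁻¹)*t := by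
      show ((φ (S*T*(S*S)*T*(S*S*S)*T) : _) : Equiv.Perm (Fin 10)) = _
      simp only [map_mul, Subgroup.coe_mul]
      rw [show φ S = φ ⟨s, hs⟩ from rfl, show φ T = φ ⟨t, ht⟩ from rfl]
      rw [h1, h2]
    rw [h, hse, hte]
    set_option maxRecDepth 100000 in decide
  have h12 : ((φ g : _) : Equiv.Perm (Fin 10)) ^ 12 = 1 := by
    rw [← SubmonoidClass.coe_pow, ← map_pow, hg12, map_one, OneMemClass.coe_one]
  rw [hφg] at h12
  revert h12
  set_option maxRecDepth 100000 in decide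
end
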